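/- arXiv:2508.09569 — 9 statements merged into one kernel-verified Lean document; each statement's English description precedes it below -/
import Mathlib

section
/- For all real x > 0, x²·ψ₁(x) − x − 1/2 > 0, where ψ₁ is the trigamma function. -/
noncomputable def trigamma (x : ℝ) : ℝ := ∑' v : ℕ, 1 / (x + v) ^ 2

noncomputable def tetragamma (x : ℝ) : ℝ := -2 * ∑' v : ℕ, 1 / (x + v) ^ 3

open Filter Topology

lemma hasSum_telescope (f : ℕ → ℝ) (hf : ∀ n, f (n + 1) ≤ f n)
    (h0 : Tendsto f atTop (𝓝 0)) : HasSum (fun n => f n - f (n + 1)) (f 0) := by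
  rw [hasSum_iff_tendsto_nat_of_nonneg (fun n => sub_nonneg.2 (hf n))]
  have : ∀ n, ∑ i ∈ Finset.range n, (f i - f (i + 1)) = f 0 - f n := by
    intro n; exact Finset.sum_range_sub' f n
  simp only [this]
  have := (tendsto_const_nhds (x := f 0)).sub h0
  simpa using this

set_option maxHeartbeats 1000000 in
theorem stmt_1 : ∀ x : ℝ, 0 < x → x ^ 2 * trigamma x - x - 1 / 2 > 0 := by
  intro x hx
  have hxv : ∀ v : ℕ, 0 < x + v := fun v => by positivity
  -- telescoping sums
  have hA : HasSum (fun v : ℕ => 1 / (x + v) - 1 / (x + v + 1)) (1 / x) := by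
    have := hasSum_telescope (fun n : ℕ => 1 / (x + n))
      (fun n => by
        apply one_div_le_one_div_of_le (hxv n)
        push_cast; linarith)
      (by
        have h1 : Tendsto (fun n : ℕ => x + (n : ℝ)) atTop atTop :=
          tendsto_atTop_add_const_left _ _ tendsto_natCast_atTop_atTop
        simpa [Pi.inv_def] using h1.inv_tendsto_atTop)
    convert this using 2 with v
    · push_cast; ring
    · push_cast; ring
  have hB : HasSum (fun v : ℕ => 1 / (2 * (x + v) ^ 2) - 1 / (2 * (x + v + 1) ^ 2))
      (1 / (2 * x ^ 2)) := by
    have := hasSum_telescope (fun n : ℕ => 1 / (2 * (x + n) ^ 2))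
      (fun n => by
        apply one_div_le_one_div_of_le (by positivity)
        have := hxv n
        push_cast; nlinarith)
      (by
        have h0 : Tendsto (fun n : ℕ => 1 / (x + (n:ℝ))) atTop (𝓝 0) := by
          simpa [one_div, Pi.inv_def] using
            (tendsto_atTop_add_const_left _ _ tendsto_natCast_atTop_atTop).inv_tendsto_atTop
        have h2 : Tendsto (fun n : ℕ => 1/2 * (1/(x+(n:ℝ)) * (1/(x+(n:ℝ)))))
            atTop (𝓝 (1/2 * (0*0))) := Tendsto.const_mul (1/2 : ℝ) (h0.mul h0)
        simp only [mul_zero] at h2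
        apply h2.congr
        intro n
        have h := (hxv n).ne'
        field_simp)
    convert this using 2 with v
    · push_cast; ring
    · push_cast; ring
  have hAB : HasSum (fun v : ℕ => (1 / (x + v) - 1 / (x + v + 1))
      + (1 / (2 * (x + v) ^ 2) - 1 / (2 * (x + v + 1) ^ 2))) (1 / x + 1 / (2 * x ^ 2)) :=
    hA.add hB
  -- key pointwise inequality
  have key : ∀ v : ℕ, (1 / (x + v) - 1 / (x + v + 1))
      + (1 / (2 * (x + v) ^ 2) - 1 / (2 * (x + v + 1) ^ 2)) < 1 / (x + v) ^ 2 := by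
    intro v
    set y : ℝ := x + v with hy
    have hy0 : 0 < y := hxv v
    have hy1 : (0:ℝ) < y + 1 := by linarith
    have hid : 1 / y ^ 2 - ((1 / y - 1 / (y + 1)) + (1 / (2 * y ^ 2) - 1 / (2 * (y + 1) ^ 2)))
        = 1 / (2 * y ^ 2 * (y + 1) ^ 2) := by
      field_simp
      ring
    have hpos : (0:ℝ) < 1 / (2 * y ^ 2 * (y + 1) ^ 2) := by positivity
    linarith
  -- summability of trigamma series
  have hg : Summable (fun v : ℕ => 1 / (x + v) ^ 2) := by
    have h2 : Summable (fun v : ℕ => 2 * ((1 / (x + v) - 1 / (x + v + 1))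
        + (1 / (2 * (x + v) ^ 2) - 1 / (2 * (x + v + 1) ^ 2)))) := hAB.summable.mul_left 2
    refine h2.of_nonneg_of_le (fun v => by positivity) ?_
    intro v
    set y : ℝ := x + v with hy
    have hy0 : 0 < y := hxv v
    have hy1 : (0:ℝ) < y + 1 := by linarith
    have hid : 2 * ((1 / y - 1 / (y + 1)) + (1 / (2 * y ^ 2) - 1 / (2 * (y + 1) ^ 2)))
        - 1 / y ^ 2 = (y + 2) / (y * (y + 1) ^ 2) := by
      field_simp
      ring
    have hpos : (0:ℝ) ≤ (y + 2) / (y * (y + 1) ^ 2) := by positivity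
    linarith
  -- strict inequality of sums
  have hlt : 1 / x + 1 / (2 * x ^ 2) < trigamma x := by
    rw [← hAB.tsum_eq]
    exact Summable.tsum_lt_tsum (i := 0) (fun v => (key v).le) (key 0) hAB.summable hg
  have hx2 : (0:ℝ) < x ^ 2 := by positivity
  have hmul : x ^ 2 * (1 / x + 1 / (2 * x ^ 2)) < x ^ 2 * trigamma x :=
    (mul_lt_mul_iff_right₀ hx2).2 hlt
  have heq : x ^ 2 * (1 / x + 1 / (2 * x ^ 2)) = x + 1 / 2 := by
    field_simp
  linarith
end

section
/- For all real x > 0, the trigamma function admits the integral representation x·ψ₁(x) − 1 = ∫₀^∞ (e^t(e^t − 1 − t)/(e^t − 1)²)·e^{−xt} dt, and the integrand coefficient e^t(e^t − 1 − t)/(e^t − 1)² is positive for all t > 0. -/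
open Real Set MeasureTheory Filter Topology

namespace Stmt2Aux

lemma integral_t_exp (s : ℝ) (hs : 0 < s) :
    ∫ t in Ioi (0:ℝ), t * exp (-(s * t)) = 1 / s ^ 2 := by
  have h := Real.integral_rpow_mul_exp_neg_mul_Ioi (a := 2) (r := s) two_pos hs
  have heq : ∫ t in Ioi (0:ℝ), t * exp (-(s * t))
      = ∫ t in Ioi (0:ℝ), t ^ ((2:ℝ) - 1) * exp (-(s * t)) := by
    refine setIntegral_congr_fun measurableSet_Ioi (fun t ht => ?_)
    rw [show (2:ℝ) - 1 = 1 by norm_num, Real.rpow_one]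
  rw [heq, h, Real.Gamma_two, mul_one, Real.rpow_two]
  rw [div_pow, one_pow]

lemma integrableOn_t_exp (s : ℝ) (hs : 0 < s) :
    IntegrableOn (fun t => t * exp (-(s * t))) (Ioi (0:ℝ)) := by
  have h := integrableOn_rpow_mul_exp_neg_mul_rpow (s := 1) (p := 1) (b := s) (by norm_num) one_pos hs
  refine h.congr_fun (fun t ht => ?_) measurableSet_Ioi
  simp [Real.rpow_one]

lemma summable_shift (x : ℝ) (hx : 0 < x) :
    Summable (fun n : ℕ => 1 / (x + n) ^ 2) := by
  have hbase : Summable (fun n : ℕ => 1 / ((n:ℝ) + 1) ^ 2) := by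
    have := (summable_nat_add_iff (f := fun n : ℕ => 1 / (n:ℝ) ^ 2) 1).mpr
      (summable_one_div_nat_pow.mpr one_lt_two)
    simpa using this
  set c := min x 1 with hc
  have hc0 : 0 < c := lt_min hx one_pos
  refine Summable.of_nonneg_of_le (fun n => by positivity)
    (fun n => ?_) (hbase.mul_left (1 / c ^ 2))
  have hcn : c * ((n:ℝ) + 1) ≤ x + n := by
    rcases le_total x 1 with h | h
    · have : c = x := by simp [hc, h]
      rw [this]; nlinarith [Nat.cast_nonneg (α := ℝ) n]
    · have : c = 1 := by simp [hc, h]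
      rw [this]; nlinarith
  have h1 : (0:ℝ) < (n:ℝ) + 1 := by positivity
  have h2 : (0:ℝ) < x + n := by positivity
  rw [div_mul_div_comm, one_mul]
  apply div_le_div_of_nonneg_left one_pos.le (by positivity)
  calc (x + n) ^ 2 ≥ (c * ((n:ℝ)+1)) ^ 2 := pow_le_pow_left₀ (by positivity) hcn 2
    _ = c ^ 2 * ((n:ℝ)+1) ^ 2 := by ring

lemma hasSum_term (x t : ℝ) (ht : 0 < t) :
    HasSum (fun n : ℕ => t * exp (-((x + n) * t)))
      (t * exp (-(x * t)) / (1 - exp (-t))) := by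
  have hlt : exp (-t) < 1 := exp_lt_one_iff.mpr (by linarith)
  have h := (hasSum_geometric_of_lt_one (exp_nonneg (-t)) hlt).mul_left (t * exp (-(x * t)))
  rw [div_eq_mul_inv]
  convert h using 2 with n
  · rfl
  rw [← Real.exp_nat_mul, mul_assoc, ← Real.exp_add]
  ring_nf

lemma trigamma_eq_integral (x : ℝ) (hx : 0 < x) :
    trigamma x = ∫ t in Ioi (0:ℝ), t * exp (-(x * t)) / (1 - exp (-t)) := by
  have hint : ∀ n : ℕ, Integrable (fun t => t * exp (-((x + n) * t)))
      (volume.restrict (Ioi (0:ℝ))) := fun n => integrableOn_t_exp _ (by positivity)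
  have hnorm : ∀ n : ℕ, (∫ t in Ioi (0:ℝ), ‖t * exp (-((x + n) * t))‖) = 1 / (x + n) ^ 2 := by
    intro n
    rw [← integral_t_exp (x + n) (by positivity)]
    refine setIntegral_congr_fun measurableSet_Ioi (fun t ht => ?_)
    have h1 : (0:ℝ) < t := ht
    exact norm_of_nonneg (by positivity)
  have hsum : Summable (fun n : ℕ => ∫ t in Ioi (0:ℝ), ‖t * exp (-((x + n) * t))‖) := by
    simp only [hnorm]; exact summable_shift x hx
  have key := integral_tsum_of_summable_integral_norm hint hsum
  have lhs : (∑' n : ℕ, ∫ t in Ioi (0:ℝ), t * exp (-((x + n) * t))) = trigamma x := by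
    unfold trigamma
    exact tsum_congr fun n => integral_t_exp (x + n) (by positivity)
  rw [← lhs, key]
  refine setIntegral_congr_fun measurableSet_Ioi (fun t ht => ?_)
  exact (hasSum_term x t ht).tsum_eq

noncomputable def hh (x : ℝ) : ℝ → ℝ :=
  fun t => if t = 0 then 1 else t * exp (-(x * t)) / (1 - exp (-t))

lemma hh_eq_on (x : ℝ) {t : ℝ} (ht : 0 < t) :
    hh x t = t * exp (-(x * t)) / (1 - exp (-t)) := by
  simp [hh, ht.ne']

lemma one_sub_exp_neg_pos {t : ℝ} (ht : 0 < t) : 0 < 1 - exp (-t) := by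
  have : exp (-t) < 1 := exp_lt_one_iff.mpr (by linarith)
  linarith

lemma exp_sub_one_pos {t : ℝ} (ht : 0 < t) : 0 < exp t - 1 := by
  have := Real.add_one_lt_exp (x := t) ht.ne'
  linarith

lemma hh_hasDerivAt (x : ℝ) (t : ℝ) (ht : t ∈ Ioi (0:ℝ)) :
    HasDerivAt (hh x) ((exp t * (exp t - 1 - t) / (exp t - 1) ^ 2) * exp (-(x * t))
      - x * (t * exp (-(x * t)) / (1 - exp (-t)))) t := by
  rw [mem_Ioi] at ht
  have hne : 1 - exp (-t) ≠ 0 := (one_sub_exp_neg_pos ht).ne'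
  have hxl : HasDerivAt (fun t : ℝ => -(x * t)) (-x) t := by
    exact ((hasDerivAt_id' t).const_mul x).neg.congr_deriv (by ring)
  have hexp : HasDerivAt (fun t : ℝ => exp (-(x * t))) (exp (-(x * t)) * -x) t := hxl.exp
  have hmul : HasDerivAt (fun t : ℝ => t * exp (-(x * t)))
      (1 * exp (-(x * t)) + t * (exp (-(x * t)) * -x)) t := (hasDerivAt_id t).mul hexp
  have hden : HasDerivAt (fun t : ℝ => 1 - exp (-t)) (exp (-t)) t := by
    have : HasDerivAt (fun t : ℝ => exp (-t)) (exp (-t) * -1) t :=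
      HasDerivAt.exp (by simpa using (hasDerivAt_neg t))
    simpa using (this.const_sub 1)
  have hdiv := hmul.div hden hne
  have heq : hh x =ᶠ[𝓝 t] fun t => t * exp (-(x * t)) / (1 - exp (-t)) := by
    filter_upwards [eventually_gt_nhds ht] with s hs using hh_eq_on x hs
  have hd2 := hdiv.congr_of_eventuallyEq heq
  convert hd2 using 1
  · rfl
  · rfl
  have he : exp (-t) = (exp t)⁻¹ := exp_neg t
  have h0 : exp t ≠ 0 := (exp_pos t).ne'
  have h1 : exp t - 1 ≠ 0 := (exp_sub_one_pos ht).ne'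
  rw [he] at hne ⊢
  field_simp
  ring

lemma hh_cont (x : ℝ) : ContinuousWithinAt (hh x) (Ici (0:ℝ)) 0 := by
  have h0 : Ici (0:ℝ) = insert 0 (Ioi 0) := by
    ext s; simp [le_iff_lt_or_eq, or_comm, eq_comm]
  rw [h0, continuousWithinAt_insert_self]
  have hden : HasDerivAt (fun t : ℝ => 1 - exp (-t)) 1 0 := by
    have : HasDerivAt (fun t : ℝ => exp (-t)) (exp (-(0:ℝ)) * -1) 0 :=
      HasDerivAt.exp (by simpa using (hasDerivAt_neg (0:ℝ)))
    simpa using (this.const_sub 1)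
  have hslope := hasDerivAt_iff_tendsto_slope.mp hden
  have hslope' : Tendsto (fun t : ℝ => (1 - exp (-t)) / t) (𝓝[≠] 0) (𝓝 1) := by
    refine hslope.congr' ?_
    filter_upwards [self_mem_nhdsWithin] with s hs
    simp only [slope, vsub_eq_sub, sub_zero]
    rw [div_eq_inv_mul]
    simp
  have hinv : Tendsto (fun t : ℝ => t / (1 - exp (-t))) (𝓝[≠] 0) (𝓝 1) := by
    have := hslope'.inv₀ one_ne_zero
    rw [inv_one] at this
    refine this.congr' ?_
    filter_upwards [self_mem_nhdsWithin] with s hs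
    rw [inv_div]
  have hexp : Tendsto (fun t : ℝ => exp (-(x * t))) (𝓝[≠] (0:ℝ)) (𝓝 1) := by
    have : Continuous (fun t : ℝ => exp (-(x * t))) := by continuity
    have h := this.continuousAt (x := (0:ℝ))
    rw [ContinuousAt] at h
    simpa using h.mono_left nhdsWithin_le_nhds
  have hprod := hinv.mul hexp
  rw [mul_one] at hprod
  have hprod' : Tendsto (hh x) (𝓝[≠] (0:ℝ)) (𝓝 1) := by
    refine hprod.congr' ?_
    filter_upwards [self_mem_nhdsWithin] with s hs
    have hs' : s ≠ 0 := hs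
    simp only [hh, if_neg hs']
    ring
  unfold ContinuousWithinAt
  have : hh x 0 = 1 := by simp [hh]
  rw [this]
  exact hprod'.mono_left (nhdsWithin_mono _ (fun s hs => ne_of_gt hs))

lemma hh_tendsto (x : ℝ) (hx : 0 < x) : Tendsto (hh x) atTop (𝓝 0) := by
  have h1 : Tendsto (fun t : ℝ => t * exp (-(x * t))) atTop (𝓝 0) := by
    have := tendsto_rpow_mul_exp_neg_mul_atTop_nhds_zero 1 x hx
    refine this.congr (fun t => ?_)
    rw [rpow_one, neg_mul]
  have h2 : Tendsto (fun t : ℝ => (1 - exp (-t))⁻¹) atTop (𝓝 1) := by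
    have he : Tendsto (fun t : ℝ => exp (-t)) atTop (𝓝 0) := by
      exact Real.tendsto_exp_atBot.comp tendsto_neg_atTop_atBot
    have := ((tendsto_const_nhds (x := (1:ℝ))).sub he).inv₀ (by norm_num)
    simpa using this
  have := h1.mul h2
  rw [zero_mul] at this
  refine this.congr' ?_
  filter_upwards [eventually_gt_atTop (0:ℝ)] with t ht
  rw [hh_eq_on x ht, div_eq_mul_inv]

lemma f_pos {t : ℝ} (ht : 0 < t) :
    0 < exp t * (exp t - 1 - t) / (exp t - 1) ^ 2 := by
  have h1 : 0 < exp t - 1 - t := by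
    have := Real.add_one_lt_exp (x := t) ht.ne'
    linarith
  have h2 : 0 < exp t - 1 := exp_sub_one_pos ht
  positivity

lemma f_le_one {t : ℝ} (ht : 0 < t) :
    exp t * (exp t - 1 - t) / (exp t - 1) ^ 2 ≤ 1 := by
  have h2 : 0 < exp t - 1 := exp_sub_one_pos ht
  rw [div_le_one (by positivity)]
  have h1 : 1 - t ≤ exp (-t) := by
    have := Real.add_one_le_exp (-t); linarith
  have he : exp (-t) * exp t = 1 := by
    rw [← Real.exp_add]; simp
  nlinarith [mul_le_mul_of_nonneg_right h1 (exp_pos t).le, exp_pos t]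

lemma int_f (x : ℝ) (hx : 0 < x) :
    IntegrableOn (fun t => (exp t * (exp t - 1 - t) / (exp t - 1) ^ 2) * exp (-(x * t)))
      (Ioi (0:ℝ)) := by
  have hg : IntegrableOn (fun t => exp (-(x * t))) (Ioi (0:ℝ)) := by
    have := exp_neg_integrableOn_Ioi 0 hx
    refine this.congr_fun (fun t _ => by simp only [neg_mul]) measurableSet_Ioi
  refine hg.mono' ?_ ?_
  · refine (ContinuousOn.mul (ContinuousOn.div (by fun_prop) (by fun_prop) ?_)
      (by fun_prop)).aestronglyMeasurable measurableSet_Ioi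
    intro t ht
    exact pow_ne_zero 2 (exp_sub_one_pos ht).ne'
  · rw [ae_restrict_iff' measurableSet_Ioi]
    filter_upwards with t ht
    rw [norm_of_nonneg (mul_nonneg (f_pos ht).le (exp_pos _).le)]
    calc exp t * (exp t - 1 - t) / (exp t - 1) ^ 2 * exp (-(x * t))
        ≤ 1 * exp (-(x * t)) :=
          mul_le_mul_of_nonneg_right (f_le_one ht) (exp_pos _).le
      _ = exp (-(x * t)) := one_mul _

lemma int_hform (x : ℝ) (hx : 0 < x) :
    IntegrableOn (fun t => t * exp (-(x * t)) / (1 - exp (-t))) (Ioi (0:ℝ)) := by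
  have hg1 : IntegrableOn (fun t => exp (-(x * t))) (Ioi (0:ℝ)) := by
    have := exp_neg_integrableOn_Ioi 0 hx
    refine this.congr_fun (fun t _ => by simp only [neg_mul]) measurableSet_Ioi
  have hg2 := integrableOn_t_exp x hx
  refine (hg2.add hg1).mono' ?_ ?_
  · refine (ContinuousOn.div (by fun_prop) (by fun_prop) ?_).aestronglyMeasurable
      measurableSet_Ioi
    intro t ht
    exact (one_sub_exp_neg_pos ht).ne'
  · rw [ae_restrict_iff' measurableSet_Ioi]
    filter_upwards with t ht
    have ht' : (0:ℝ) < t := ht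
    have hu : 0 < 1 - exp (-t) := one_sub_exp_neg_pos ht'
    have hE : 0 < exp (-(x * t)) := exp_pos _
    rw [norm_of_nonneg (by positivity)]
    rw [div_le_iff₀ hu]
    have h1 : exp (-t) * (1 + t) ≤ 1 := by
      have ha : 1 + t ≤ exp t := by linarith [Real.add_one_le_exp t]
      have he : exp (-t) * exp t = 1 := by rw [← Real.exp_add]; simp
      nlinarith [exp_pos (-t)]
    simp only [Pi.add_apply]
    nlinarith [mul_nonneg hE.le (by linarith : (0:ℝ) ≤ 1 - exp (-t) * (1 + t))]

end Stmt2Aux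

open Stmt2Aux
theorem stmt_2 :
    (∀ x : ℝ, 0 < x →
      x * trigamma x - 1 =
        ∫ t in Set.Ioi (0 : ℝ),
          (Real.exp t * (Real.exp t - 1 - t) / (Real.exp t - 1) ^ 2) * Real.exp (-x * t)) ∧
    (∀ t : ℝ, 0 < t →
      0 < Real.exp t * (Real.exp t - 1 - t) / (Real.exp t - 1) ^ 2) := by
  constructor
  · intro x hx
    have hintF := (int_f x hx).sub ((int_hform x hx).const_mul x)
    have hIBP := integral_Ioi_of_hasDerivAt_of_tendsto (hh_cont x)
      (hh_hasDerivAt x) hintF (hh_tendsto x hx)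
    have hh0 : hh x 0 = 1 := by simp [hh]
    rw [hh0, zero_sub] at hIBP
    have hsplit : ∫ t in Ioi (0:ℝ),
        ((exp t * (exp t - 1 - t) / (exp t - 1) ^ 2) * exp (-(x * t))
          - x * (t * exp (-(x * t)) / (1 - exp (-t))))
        = (∫ t in Ioi (0:ℝ), (exp t * (exp t - 1 - t) / (exp t - 1) ^ 2) * exp (-(x * t)))
          - x * ∫ t in Ioi (0:ℝ), t * exp (-(x * t)) / (1 - exp (-t)) := by
      rw [integral_sub (int_f x hx) ((int_hform x hx).const_mul x), MeasureTheory.integral_const_mul]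
    rw [hsplit] at hIBP
    rw [← trigamma_eq_integral x hx] at hIBP
    have : (∫ t in Ioi (0:ℝ), (exp t * (exp t - 1 - t) / (exp t - 1) ^ 2) * exp (-(x * t)))
        = x * trigamma x - 1 := by linarith
    rw [this.symm]
    refine setIntegral_congr_fun measurableSet_Ioi (fun t ht => ?_)
    rw [neg_mul]
  · intro t ht
    exact f_pos ht
end

section
/- For all real x > 0, x²·ψ₁(x) − x − 1/2 = ∫₀^∞ (e^t(e^t(t−2) + t + 2)/(e^t − 1)³)·e^{−xt} dt, and the coefficient e^t(e^t(t−2)+t+2)/(e^t−1)³ is positive for all t > 0. -/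
open Real MeasureTheory Set Filter Topology

noncomputable def ggaux (t : ℝ) : ℝ := exp t * (exp t * (t - 2) + t + 2) / (exp t - 1) ^ 3
noncomputable def Haux (t : ℝ) : ℝ := if t = 0 then 1 else t * exp t / (exp t - 1)
noncomputable def H1aux (t : ℝ) : ℝ :=
  if t = 0 then 1/2 else exp t * (exp t - 1 - t) / (exp t - 1) ^ 2

lemma expm1_pos {t : ℝ} (ht : 0 < t) : 0 < exp t - 1 := by
  have := Real.add_one_lt_exp (ne_of_gt ht); linarith

lemma num_pos {t : ℝ} (ht : 0 < t) : 0 < exp t * (t - 2) + t + 2 := by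
  have h1 : StrictMonoOn (fun t : ℝ => exp t * (t - 1) + 1) (Ici 0) := by
    apply strictMonoOn_of_deriv_pos (convex_Ici 0)
    · fun_prop
    · intro s hs
      rw [interior_Ici] at hs
      have hd : HasDerivAt (fun t : ℝ => exp t * (t - 1) + 1) (s * exp s) s := by
        have := ((Real.hasDerivAt_exp s).mul ((hasDerivAt_id s).sub_const 1)).add_const 1
        refine this.congr_deriv ?_; simp only [id_eq]; ring
      rw [hd.deriv]
      exact mul_pos hs (exp_pos s)
  have h1' : ∀ s : ℝ, 0 < s → 0 < exp s * (s - 1) + 1 := by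
    intro s hs
    have := h1 (self_mem_Ici) (le_of_lt hs : (0:ℝ) ≤ s) hs
    simpa using this
  have h2 : StrictMonoOn (fun t : ℝ => exp t * (t - 2) + t + 2) (Ici 0) := by
    apply strictMonoOn_of_deriv_pos (convex_Ici 0)
    · fun_prop
    · intro s hs
      rw [interior_Ici] at hs
      have hd : HasDerivAt (fun t : ℝ => exp t * (t - 2) + t + 2) (exp s * (s - 1) + 1) s := by
        have := (((Real.hasDerivAt_exp s).mul ((hasDerivAt_id s).sub_const 2)).add (hasDerivAt_id s)).add_const 2
        refine this.congr_deriv ?_; simp only [id_eq]; ring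
      rw [hd.deriv]
      exact h1' s hs
  have := h2 (self_mem_Ici) (le_of_lt ht : (0:ℝ) ≤ t) ht
  simpa using this

lemma gg_pos {t : ℝ} (ht : 0 < t) : 0 < ggaux t :=
  div_pos (mul_pos (exp_pos t) (num_pos ht)) (pow_pos (expm1_pos ht) 3)

lemma hasDerivAt_Hf {t : ℝ} (ht : 0 < t) :
    HasDerivAt (fun t => t * exp t / (exp t - 1))
      (exp t * (exp t - 1 - t) / (exp t - 1) ^ 2) t := by
  have hne : exp t - 1 ≠ 0 := ne_of_gt (expm1_pos ht)
  have hd : HasDerivAt (fun t : ℝ => t * exp t / (exp t - 1))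
      (((exp t + t * exp t) * (exp t - 1) - t * exp t * exp t) / (exp t - 1) ^ 2) t := by
    have hn : HasDerivAt (fun t : ℝ => t * exp t) (exp t + t * exp t) t := by
      have := (hasDerivAt_id t).mul (Real.hasDerivAt_exp t)
      refine this.congr_deriv ?_; simp [id]
    have hden : HasDerivAt (fun t : ℝ => exp t - 1) (exp t) t :=
      (Real.hasDerivAt_exp t).sub_const 1
    exact hn.div hden hne
  convert hd using 1
  field_simp
  ring

lemma hasDerivAt_H1f {t : ℝ} (ht : 0 < t) :
    HasDerivAt (fun t => exp t * (exp t - 1 - t) / (exp t - 1) ^ 2) (ggaux t) t := by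
  have hne : exp t - 1 ≠ 0 := ne_of_gt (expm1_pos ht)
  have hd : HasDerivAt (fun t : ℝ => exp t * (exp t - 1 - t) / (exp t - 1) ^ 2)
      (((exp t * (exp t - 1 - t) + exp t * (exp t - 1)) * (exp t - 1) ^ 2 -
        exp t * (exp t - 1 - t) * (2 * (exp t - 1) * exp t)) / ((exp t - 1) ^ 2) ^ 2) t := by
    have hn : HasDerivAt (fun t : ℝ => exp t * (exp t - 1 - t))
        (exp t * (exp t - 1 - t) + exp t * (exp t - 1)) t := by
      have := (Real.hasDerivAt_exp t).mul
        (((Real.hasDerivAt_exp t).sub_const 1).sub (hasDerivAt_id t))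
      exact this
    have hden : HasDerivAt (fun t : ℝ => (exp t - 1) ^ 2) (2 * (exp t - 1) * exp t) t := by
      have := ((Real.hasDerivAt_exp t).sub_const 1).pow 2
      refine this.congr_deriv ?_; norm_num
    exact hn.div hden (pow_ne_zero 2 hne)
  convert hd using 1
  rw [ggaux]
  field_simp
  ring

lemma Haux_eq {t : ℝ} (ht : 0 < t) : Haux t = t * exp t / (exp t - 1) := by
  rw [Haux, if_neg (ne_of_gt ht)]

lemma H1aux_eq {t : ℝ} (ht : 0 < t) : H1aux t = exp t * (exp t - 1 - t) / (exp t - 1) ^ 2 := by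
  rw [H1aux, if_neg (ne_of_gt ht)]

lemma hasDerivAt_Haux {t : ℝ} (ht : 0 < t) : HasDerivAt Haux (H1aux t) t := by
  rw [H1aux_eq ht]
  apply (hasDerivAt_Hf ht).congr_of_eventuallyEq
  filter_upwards [eventually_gt_nhds ht] with s hs
  exact Haux_eq hs

lemma hasDerivAt_H1aux {t : ℝ} (ht : 0 < t) : HasDerivAt H1aux (ggaux t) t := by
  apply (hasDerivAt_H1f ht).congr_of_eventuallyEq
  filter_upwards [eventually_gt_nhds ht] with s hs
  exact H1aux_eq hs

lemma tendsto_div_expm1 : Tendsto (fun t : ℝ => t / (exp t - 1)) (𝓝[≠] (0:ℝ)) (𝓝 1) := by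
  have h : Tendsto (fun t : ℝ => (exp t - 1) / t) (𝓝[≠] (0:ℝ)) (𝓝 1) := by
    have := hasDerivAt_iff_tendsto_slope.mp (Real.hasDerivAt_exp 0)
    simp only [Real.exp_zero] at this
    apply this.congr
    intro t
    simp [slope_def_field, div_eq_inv_mul]
  have h2 := h.inv₀ (by norm_num)
  rw [inv_one] at h2
  apply h2.congr
  intro t
  rw [inv_div]

lemma tendsto_sq : Tendsto (fun t : ℝ => (exp t - 1 - t) / t ^ 2) (𝓝[>] (0:ℝ)) (𝓝 (1/2)) := by
  apply HasDerivAt.lhopital_zero_nhdsGT (f' := fun t => exp t - 1) (g' := fun t => 2 * t)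
  · filter_upwards with t
    exact ((Real.hasDerivAt_exp t).sub_const 1).sub (hasDerivAt_id t)
  · filter_upwards with t
    simpa using (hasDerivAt_pow 2 t)
  · filter_upwards [self_mem_nhdsWithin] with t (ht : 0 < t)
    positivity
  · have hc : Continuous (fun t : ℝ => exp t - 1 - t) := by fun_prop
    have := hc.tendsto 0
    simpa using this.mono_left nhdsWithin_le_nhds
  · have := (continuous_pow 2 (M := ℝ)).tendsto 0
    simpa using this.mono_left nhdsWithin_le_nhds
  · have h := tendsto_div_expm1.mono_left (nhdsWithin_mono 0 (fun t (ht : t ∈ Ioi 0) => ne_of_gt ht))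
    have h2 := h.inv₀ (by norm_num)
    rw [inv_one] at h2
    have : Tendsto (fun t : ℝ => (exp t - 1) / t * (1/2)) (𝓝[>] (0:ℝ)) (𝓝 (1 * (1/2))) := by
      apply Tendsto.mul_const
      apply h2.congr; intro t; rw [inv_div]
    rw [one_mul] at this
    apply this.congr
    intro t
    ring

lemma tendsto_exp_right : Tendsto (fun t : ℝ => exp t) (𝓝[>] (0:ℝ)) (𝓝 1) := by
  have := Real.continuous_exp.tendsto 0
  simpa using this.mono_left nhdsWithin_le_nhds

lemma tendsto_H0 : Tendsto (fun t : ℝ => t * exp t / (exp t - 1)) (𝓝[>] (0:ℝ)) (𝓝 1) := by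
  have h1 := tendsto_div_expm1.mono_left (nhdsWithin_mono 0 (fun t (ht : t ∈ Ioi 0) => ne_of_gt ht))
  have := h1.mul tendsto_exp_right
  rw [one_mul] at this
  apply this.congr
  intro t; ring

lemma tendsto_H10 :
    Tendsto (fun t : ℝ => exp t * (exp t - 1 - t) / (exp t - 1) ^ 2) (𝓝[>] (0:ℝ)) (𝓝 (1/2)) := by
  have h1 := tendsto_div_expm1.mono_left (nhdsWithin_mono 0 (fun t (ht : t ∈ Ioi 0) => ne_of_gt ht))
  have h3 := (tendsto_exp_right.mul tendsto_sq).mul (h1.mul h1)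
  norm_num at h3
  apply h3.congr'
  filter_upwards [self_mem_nhdsWithin] with t (ht : 0 < t)
  have hne : exp t - 1 ≠ 0 := ne_of_gt (expm1_pos ht)
  have htne : t ≠ 0 := ne_of_gt ht
  field_simp

lemma cwa_Haux : ContinuousWithinAt Haux (Ici 0) 0 := by
  rw [← continuousWithinAt_Ioi_iff_Ici]
  have : Haux 0 = 1 := by rw [Haux, if_pos rfl]
  rw [ContinuousWithinAt, this]
  apply tendsto_H0.congr'
  filter_upwards [self_mem_nhdsWithin] with t (ht : 0 < t)
  exact (Haux_eq ht).symm

lemma cwa_H1aux : ContinuousWithinAt H1aux (Ici 0) 0 := by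
  rw [← continuousWithinAt_Ioi_iff_Ici]
  have : H1aux 0 = 1/2 := by rw [H1aux, if_pos rfl]
  rw [ContinuousWithinAt, this]
  apply tendsto_H10.congr'
  filter_upwards [self_mem_nhdsWithin] with t (ht : 0 < t)
  exact (H1aux_eq ht).symm

lemma H_nonneg {t : ℝ} (ht : 0 < t) : 0 ≤ Haux t := by
  rw [Haux_eq ht]; have := expm1_pos ht; positivity

lemma H_le {t : ℝ} (ht : 0 < t) : Haux t ≤ t + 1 := by
  rw [Haux_eq ht, div_le_iff₀ (expm1_pos ht)]
  have h := Real.add_one_le_exp t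
  nlinarith [Real.exp_pos t]

lemma H1_nonneg {t : ℝ} (ht : 0 < t) : 0 ≤ H1aux t := by
  rw [H1aux_eq ht]
  have h := Real.add_one_le_exp t
  have h1 : 0 ≤ exp t - 1 - t := by linarith
  positivity

lemma H1_le_one {t : ℝ} (ht : 0 < t) : H1aux t ≤ 1 := by
  rw [H1aux_eq ht, div_le_one (pow_pos (expm1_pos ht) 2)]
  have h := Real.add_one_le_exp (-t)
  have h2 : exp (-t) * exp t = 1 := by rw [← Real.exp_add]; simp
  nlinarith [Real.exp_pos t, expm1_pos ht]

lemma tendsto_linear_exp {x : ℝ} (hx : 0 < x) :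
    Tendsto (fun t : ℝ => (t + 1) * exp (-x * t)) atTop (𝓝 0) := by
  have h1 : Tendsto (fun u : ℝ => (u / x + 1) * exp (-u)) atTop (𝓝 0) := by
    have ha := (tendsto_pow_mul_exp_neg_atTop_nhds_zero 1).const_mul (1/x)
    have hb := tendsto_exp_neg_atTop_nhds_zero
    have := ha.add hb
    norm_num at this
    apply this.congr
    intro u; field_simp
  have h2 : Tendsto (fun t : ℝ => x * t) atTop atTop :=
    tendsto_id.const_mul_atTop hx
  have := h1.comp h2
  apply this.congr
  intro t
  have hxne : x ≠ 0 := ne_of_gt hx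
  simp only [Function.comp]
  field_simp

lemma tendsto_H1_atTop : Tendsto H1aux atTop (𝓝 1) := by
  have h1 : Tendsto (fun t : ℝ => (1 - (t + 1) * exp (-t)) / (1 - exp (-t)) ^ 2) atTop (𝓝 1) := by
    have ha : Tendsto (fun t : ℝ => 1 - (t + 1) * exp (-t)) atTop (𝓝 1) := by
      have := (tendsto_const_nhds (x := (1:ℝ)) (f := atTop)).sub (tendsto_linear_exp one_pos)
      norm_num at this
      apply this.congr; intro t; norm_num
    have hb : Tendsto (fun t : ℝ => (1 - exp (-t)) ^ 2) atTop (𝓝 1) := by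
      have := ((tendsto_const_nhds (x := (1:ℝ)) (f := atTop)).sub tendsto_exp_neg_atTop_nhds_zero).pow 2
      norm_num at this
      exact this
    have := ha.div hb (by norm_num)
    norm_num at this
    exact this
  apply h1.congr'
  filter_upwards [eventually_gt_atTop 0] with t ht
  rw [H1aux_eq ht]
  have hne : exp t - 1 ≠ 0 := ne_of_gt (expm1_pos ht)
  have he : exp (-t) = (exp t)⁻¹ := Real.exp_neg t
  rw [he]
  have hpos : exp t ≠ 0 := ne_of_gt (Real.exp_pos t)
  field_simp
  ring

lemma integrableOn_id_exp {c : ℝ} (hc : 0 < c) :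
    IntegrableOn (fun t : ℝ => t * exp (-(c * t))) (Ioi 0) := by
  have := integrableOn_rpow_mul_exp_neg_mul_rpow (p := 1) (s := 1) (b := c) (by norm_num)
    one_pos hc
  apply this.congr_fun ?_ measurableSet_Ioi
  intro t ht
  rw [mem_Ioi] at ht
  simp only [rpow_one, neg_mul]

lemma integral_id_exp {c : ℝ} (hc : 0 < c) :
    ∫ t in Ioi 0, t * exp (-(c * t)) = 1 / c ^ 2 := by
  have h := Real.integral_rpow_mul_exp_neg_mul_Ioi (a := 2) (r := c) two_pos hc
  rw [Real.Gamma_two] at h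
  rw [show ∫ t in Ioi 0, t * exp (-(c * t)) = ∫ t : ℝ in Ioi 0, t ^ ((2:ℝ) - 1) * exp (-(c * t)) from ?_, h]
  · rw [mul_one]
    rw [show ((1:ℝ)/c) ^ (2:ℝ) = (1/c)^(2:ℕ) from by rw [← Real.rpow_natCast]; norm_num]
    rw [div_pow, one_pow]
  · apply setIntegral_congr_fun measurableSet_Ioi
    intro t ht
    rw [mem_Ioi] at ht
    norm_num

set_option maxHeartbeats 1000000 in
lemma summable_inv_sq {x : ℝ} (hx : 0 < x) : Summable (fun n : ℕ => 1 / (x + n) ^ 2) := by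
  rw [← summable_nat_add_iff (f := fun n : ℕ => 1 / (x + n) ^ 2) 1]
  apply Summable.of_nonneg_of_le (fun n => by positivity)
    (f := fun n : ℕ => 1 / ((n : ℝ) + 1) ^ 2)
  · intro n
    have h1 : (0:ℝ) < (n : ℝ) + 1 := by positivity
    apply one_div_le_one_div_of_le (by positivity)
    have : ((n + 1 : ℕ) : ℝ) = (n : ℝ) + 1 := by push_cast; ring
    nlinarith [this]
  · have := Real.summable_one_div_nat_pow.mpr (le_refl 2)
    rw [← summable_nat_add_iff 1] at this
    apply this.congr
    intro n
    push_cast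
    ring

lemma trigamma_eq_integral {x : ℝ} (hx : 0 < x) :
    ∫ t in Ioi 0, (t * exp t / (exp t - 1)) * exp (-x * t) = trigamma x := by
  set F : ℕ → ℝ → ℝ := fun n t => t * exp (-((x + n) * t)) with hF
  have hxn : ∀ n : ℕ, 0 < x + n := fun n => by positivity
  have hInt : ∀ n, Integrable (F n) (volume.restrict (Ioi 0)) := fun n =>
    integrableOn_id_exp (hxn n)
  have hNorm : ∀ n, ∫ t in Ioi 0, ‖F n t‖ = 1 / (x + n) ^ 2 := by
    intro n
    rw [← integral_id_exp (hxn n)]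
    apply setIntegral_congr_fun measurableSet_Ioi
    intro t ht
    rw [mem_Ioi] at ht
    simp only [hF, Real.norm_eq_abs]
    rw [abs_of_nonneg (by positivity)]
  have hSum : Summable fun n => ∫ t in Ioi 0, ‖F n t‖ := by
    simp_rw [hNorm]; exact summable_inv_sq hx
  have key := MeasureTheory.integral_tsum_of_summable_integral_norm hInt hSum
  have hpt : ∀ t ∈ Ioi (0:ℝ), (∑' n, F n t) = (t * exp t / (exp t - 1)) * exp (-x * t) := by
    intro t ht
    rw [mem_Ioi] at ht
    have hr0 : (0:ℝ) ≤ exp (-t) := (Real.exp_pos _).le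
    have hr1 : exp (-t) < 1 := by
      rw [Real.exp_lt_one_iff]; linarith
    have hterm : ∀ n : ℕ, F n t = (t * exp (-x * t)) * exp (-t) ^ n := by
      intro n
      rw [hF]
      simp only
      rw [← Real.exp_nat_mul, mul_assoc, ← Real.exp_add]
      congr 1
      ring
    rw [tsum_congr hterm, tsum_mul_left, tsum_geometric_of_lt_one hr0 hr1]
    have hne : exp t - 1 ≠ 0 := ne_of_gt (expm1_pos ht)
    have he : exp (-t) = (exp t)⁻¹ := Real.exp_neg t
    rw [he]
    have hpos : exp t ≠ 0 := ne_of_gt (Real.exp_pos t)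
    field_simp
  calc ∫ t in Ioi 0, (t * exp t / (exp t - 1)) * exp (-x * t)
      = ∫ t in Ioi 0, (∑' n, F n t) := by
        apply setIntegral_congr_fun measurableSet_Ioi
        intro t ht
        exact (hpt t ht).symm
    _ = ∑' n, ∫ t in Ioi 0, F n t := key.symm
    _ = trigamma x := by
        rw [trigamma]
        apply tsum_congr
        intro n
        rw [show ∫ t in Ioi 0, F n t = 1 / (x + n)^2 from ?_]
        exact integral_id_exp (hxn n)

-- Integrability of Haux * exp(-x t) on Ioi 0
lemma integrableOn_Haux_exp {x : ℝ} (hx : 0 < x) :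
    IntegrableOn (fun t => Haux t * exp (-x * t)) (Ioi 0) := by
  have hbound : IntegrableOn (fun t : ℝ => (t + 1) * exp (-x * t)) (Ioi 0) := by
    have h1 := integrableOn_id_exp hx
    have h2 : IntegrableOn (fun t : ℝ => exp (-x * t)) (Ioi 0) :=
      exp_neg_integrableOn_Ioi 0 hx
    have h3 : IntegrableOn (fun t : ℝ => t * exp (-(x * t)) + exp (-x * t)) (Ioi 0) :=
      h1.add h2
    apply h3.congr_fun ?_ measurableSet_Ioi
    intro t _
    simp only [neg_mul]
    ring
  have hcontH : ContinuousOn Haux (Ioi 0) := by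
    have hf : ContinuousOn (fun t : ℝ => t * exp t / (exp t - 1)) (Ioi 0) := by
      intro t ht
      rw [mem_Ioi] at ht
      have hne : exp t - 1 ≠ 0 := ne_of_gt (expm1_pos ht)
      apply ContinuousAt.continuousWithinAt
      exact (((continuousAt_id.mul (Real.continuous_exp.continuousAt))).div
        ((Real.continuous_exp.continuousAt).sub continuousAt_const) hne)
    exact hf.congr (fun t ht => Haux_eq (mem_Ioi.mp ht))
  apply MeasureTheory.Integrable.mono hbound
  · apply ContinuousOn.aestronglyMeasurable ?_ measurableSet_Ioi
    exact hcontH.mul (by fun_prop)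
  · rw [ae_restrict_iff' measurableSet_Ioi]
    filter_upwards with t ht
    rw [mem_Ioi] at ht
    have h1 : 0 < exp (-x * t) := Real.exp_pos _
    rw [Real.norm_eq_abs, Real.norm_eq_abs,
      abs_of_nonneg (mul_nonneg (H_nonneg ht) h1.le),
      abs_of_nonneg (by positivity)]
    exact mul_le_mul_of_nonneg_right (H_le ht) h1.le

lemma integrableOn_ggaux : IntegrableOn ggaux (Ioi 0) := by
  apply integrableOn_Ioi_deriv_of_nonneg cwa_H1aux
    (fun t ht => hasDerivAt_H1aux (mem_Ioi.mp ht))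
    (fun t ht => (gg_pos (mem_Ioi.mp ht)).le) tendsto_H1_atTop

lemma continuousOn_ggaux : ContinuousOn ggaux (Ioi 0) := by
  intro t ht
  rw [mem_Ioi] at ht
  have hne : (exp t - 1) ^ 3 ≠ 0 := pow_ne_zero 3 (ne_of_gt (expm1_pos ht))
  apply ContinuousAt.continuousWithinAt
  unfold ggaux
  apply ContinuousAt.div
  · fun_prop
  · fun_prop
  · exact hne

lemma integrableOn_ggaux_exp {x : ℝ} (hx : 0 < x) :
    IntegrableOn (fun t => ggaux t * exp (-x * t)) (Ioi 0) := by
  apply MeasureTheory.Integrable.mono integrableOn_ggaux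
  · apply ContinuousOn.aestronglyMeasurable ?_ measurableSet_Ioi
    exact continuousOn_ggaux.mul (by fun_prop)
  · rw [ae_restrict_iff' measurableSet_Ioi]
    filter_upwards with t ht
    rw [mem_Ioi] at ht
    have h1 : 0 < exp (-x * t) := Real.exp_pos _
    have h2 : exp (-x * t) ≤ 1 := by
      rw [Real.exp_le_one_iff]
      nlinarith
    rw [Real.norm_eq_abs, Real.norm_eq_abs,
      abs_of_nonneg (mul_nonneg (gg_pos ht).le h1.le), abs_of_nonneg (gg_pos ht).le]
    nlinarith [gg_pos ht]

lemma key_ftc {x : ℝ} (hx : 0 < x) :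
    ∫ t in Ioi 0, (x ^ 2 * (Haux t * exp (-x * t)) - ggaux t * exp (-x * t)) = x + 1 / 2 := by
  set G : ℝ → ℝ := fun t => -(H1aux t + x * Haux t) * exp (-x * t) with hG
  have hcont : ContinuousWithinAt G (Ici 0) 0 := by
    apply ContinuousWithinAt.mul
    · exact (cwa_H1aux.add (cwa_Haux.const_mul x)).neg
    · exact (Real.continuous_exp.comp (continuous_const.mul continuous_id)).continuousWithinAt
  have hderiv : ∀ t ∈ Ioi (0:ℝ), HasDerivAt G
      (x ^ 2 * (Haux t * exp (-x * t)) - ggaux t * exp (-x * t)) t := by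
    intro t ht
    rw [mem_Ioi] at ht
    have hexp : HasDerivAt (fun t : ℝ => exp (-x * t)) (exp (-x * t) * -x) t := by
      have hin : HasDerivAt (fun t : ℝ => -x * t) (-x) t := by
        have := (hasDerivAt_id t).const_mul (-x)
        refine this.congr_deriv ?_; simp
      exact hin.exp
    have hmain := (((hasDerivAt_H1aux ht).add ((hasDerivAt_Haux ht).const_mul x)).neg).mul hexp
    refine hmain.congr_deriv ?_
    simp only [Pi.neg_apply, Pi.add_apply]
    ring
  have hint : IntegrableOn
      (fun t => x ^ 2 * (Haux t * exp (-x * t)) - ggaux t * exp (-x * t)) (Ioi 0) := by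
    exact ((integrableOn_Haux_exp hx).const_mul (x ^ 2)).sub (integrableOn_ggaux_exp hx)
  have htop : Tendsto G atTop (𝓝 0) := by
    have hH : Tendsto (fun t : ℝ => Haux t * exp (-x * t)) atTop (𝓝 0) := by
      apply squeeze_zero' ?_ ?_ (tendsto_linear_exp hx)
      · filter_upwards [eventually_gt_atTop 0] with t ht
        exact mul_nonneg (H_nonneg ht) (Real.exp_pos _).le
      · filter_upwards [eventually_gt_atTop 0] with t ht
        exact mul_le_mul_of_nonneg_right (H_le ht) (Real.exp_pos _).le
    have hH1 : Tendsto (fun t : ℝ => H1aux t * exp (-x * t)) atTop (𝓝 0) := by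
      have hbase : Tendsto (fun t : ℝ => exp (-x * t)) atTop (𝓝 0) := by
        have := tendsto_exp_neg_atTop_nhds_zero.comp (tendsto_id.const_mul_atTop hx)
        apply this.congr
        intro t; simp [Function.comp, neg_mul]
      apply squeeze_zero' ?_ ?_ hbase
      · filter_upwards [eventually_gt_atTop 0] with t ht
        exact mul_nonneg (H1_nonneg ht) (Real.exp_pos _).le
      · filter_upwards [eventually_gt_atTop 0] with t ht
        nlinarith [H1_le_one ht, Real.exp_pos (-x * t), H1_nonneg ht]
    have := (hH1.add (hH.const_mul x)).neg
    norm_num at this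
    apply this.congr
    intro t
    rw [hG]
    ring
  have := integral_Ioi_of_hasDerivAt_of_tendsto hcont hderiv hint htop
  rw [this, hG]
  simp only
  rw [Haux, H1aux, if_pos rfl, if_pos rfl]
  norm_num
  ring

theorem stmt_3 :
    (∀ x : ℝ, 0 < x →
      x ^ 2 * trigamma x - x - 1 / 2 =
        ∫ t in Set.Ioi (0 : ℝ),
          (Real.exp t * (Real.exp t * (t - 2) + t + 2) / (Real.exp t - 1) ^ 3) *
            Real.exp (-x * t)) ∧
    (∀ t : ℝ, 0 < t →
      0 < Real.exp t * (Real.exp t * (t - 2) + t + 2) / (Real.exp t - 1) ^ 3) := by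
  constructor
  · intro x hx
    have h1 : ∫ t in Ioi (0:ℝ),
        (Real.exp t * (Real.exp t * (t - 2) + t + 2) / (Real.exp t - 1) ^ 3) *
          Real.exp (-x * t) = ∫ t in Ioi (0:ℝ), ggaux t * exp (-x * t) := by
      apply setIntegral_congr_fun measurableSet_Ioi
      intro t _
      simp only [ggaux]
    rw [h1]
    have h2 : (∫ t in Ioi (0:ℝ), x ^ 2 * (Haux t * exp (-x * t))) -
        (∫ t in Ioi (0:ℝ), ggaux t * exp (-x * t)) = x + 1 / 2 := by
      rw [← integral_sub ((integrableOn_Haux_exp hx).const_mul (x ^ 2))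
        (integrableOn_ggaux_exp hx)]
      exact key_ftc hx
    have h3 : ∫ t in Ioi (0:ℝ), x ^ 2 * (Haux t * exp (-x * t)) = x ^ 2 * trigamma x := by
      rw [MeasureTheory.integral_const_mul]
      congr 1
      rw [← trigamma_eq_integral hx]
      apply setIntegral_congr_fun measurableSet_Ioi
      intro t ht
      simp only
      rw [Haux_eq (mem_Ioi.mp ht)]
    rw [h3] at h2
    linarith
  · intro t ht
    exact gg_pos ht
end

section
/- The function x ↦ x³·ψ₁(x) − x² is strictly increasing on (0, ∞), where ψ₁ is the trigamma function. -/
lemma summable_trig {x : ℝ} (hx : 0 < x) : Summable (fun v : ℕ => 1 / (x + v) ^ 2) := by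
  have base : Summable (fun n : ℕ => 1 / ((n : ℝ) + 1) ^ 2) := by
    have h := (summable_nat_add_iff (f := fun n : ℕ => 1 / (n : ℝ) ^ 2) 1).mpr
      (Real.summable_one_div_nat_pow.mpr one_lt_two)
    apply h.congr
    intro n
    push_cast
    ring
  rw [← summable_nat_add_iff 1]
  apply Summable.of_nonneg_of_le (fun n => by positivity) _ base
  intro n
  have h1 : (0:ℝ) < (n:ℝ) + 1 := by positivity
  have h2 : (n:ℝ) + 1 ≤ x + ((n : ℕ) + 1 : ℕ) := by push_cast; linarith
  apply one_div_le_one_div_of_le (by positivity)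
  exact pow_le_pow_left₀ h1.le h2 2

lemma telescope {x : ℝ} (hx : 0 < x) :
    HasSum (fun v : ℕ => 1 / ((x + v) * (x + v + 1))) (1 / x) := by
  have hpos : ∀ v : ℕ, (0:ℝ) < x + v := fun v => by positivity
  rw [hasSum_iff_tendsto_nat_of_nonneg (fun i => by positivity)]
  have heq : ∀ n : ℕ, ∑ i ∈ Finset.range n, 1 / ((x + i) * (x + i + 1))
      = 1 / x - 1 / (x + n) := by
    intro n
    induction n with
    | zero => simp
    | succ n ih =>
      rw [Finset.sum_range_succ, ih]
      have h1 := (hpos n).ne'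
      have h2 : x + (n:ℝ) + 1 ≠ 0 := by positivity
      have h3 : x + ((n:ℕ)+1 : ℕ) = x + (n:ℝ) + 1 := by push_cast; ring
      rw [h3]
      field_simp
      ring
  simp only [heq]
  have : Filter.Tendsto (fun n : ℕ => 1 / (x + n)) Filter.atTop (nhds 0) := by
    have h1 : Filter.Tendsto (fun n : ℕ => x + (n:ℝ)) Filter.atTop Filter.atTop :=
      Filter.tendsto_atTop_add_const_left _ x tendsto_natCast_atTop_atTop
    simpa [one_div, Function.comp_def] using tendsto_inv_atTop_zero.comp h1
  simpa using Filter.Tendsto.sub tendsto_const_nhds this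

lemma key_eq {x : ℝ} (hx : 0 < x) :
    x ^ 3 * trigamma x - x ^ 2 = ∑' v : ℕ, x ^ 3 / ((x + v) ^ 2 * (x + v + 1)) := by
  have hpos : ∀ v : ℕ, (0:ℝ) < x + v := fun v => by positivity
  have h1 := summable_trig hx
  have h2 := (telescope hx).summable
  have hdiff : ∀ v : ℕ, x ^ 3 * (1 / (x + v) ^ 2 - 1 / ((x + v) * (x + v + 1)))
      = x ^ 3 / ((x + v) ^ 2 * (x + v + 1)) := by
    intro v
    have ha := (hpos v).ne'
    have hb : x + (v:ℝ) + 1 ≠ 0 := by positivity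
    field_simp
    ring
  calc x ^ 3 * trigamma x - x ^ 2
      = x ^ 3 * ∑' v : ℕ, 1 / (x + v) ^ 2
        - x ^ 3 * ∑' v : ℕ, 1 / ((x + v) * (x + v + 1)) := by
        rw [trigamma, (telescope hx).tsum_eq]
        field_simp
    _ = ∑' v : ℕ, x ^ 3 * (1 / (x + v) ^ 2 - 1 / ((x + v) * (x + v + 1))) := by
        rw [← tsum_mul_left, ← tsum_mul_left,
          ← Summable.tsum_sub (h1.mul_left (x ^ 3)) (h2.mul_left (x ^ 3))]
        exact tsum_congr fun v => (mul_sub _ _ _).symm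
    _ = ∑' v : ℕ, x ^ 3 / ((x + v) ^ 2 * (x + v + 1)) := by
        exact tsum_congr hdiff

lemma summable_g {x : ℝ} (hx : 0 < x) :
    Summable (fun v : ℕ => x ^ 3 / ((x + v) ^ 2 * (x + v + 1))) := by
  have h1 := (summable_trig hx).mul_left (x ^ 3)
  have h2 := ((telescope hx).summable).mul_left (x ^ 3)
  apply Summable.congr (h1.sub h2)
  intro v
  have ha : (0:ℝ) < x + v := by positivity
  have hb : (0:ℝ) < x + v + 1 := by positivity
  field_simp
  ring

theorem stmt_5 :
    StrictMonoOn (fun x : ℝ => x ^ 3 * trigamma x - x ^ 2) (Set.Ioi 0) := by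
  intro x hx y hy hxy
  simp only [Set.mem_Ioi] at hx hy
  simp only
  rw [key_eq hx, key_eq hy]
  have hle : ∀ v : ℕ, x ^ 3 / ((x + v) ^ 2 * (x + v + 1))
      ≤ y ^ 3 / ((y + v) ^ 2 * (y + v + 1)) := by
    intro v
    have hv : (0:ℝ) ≤ v := Nat.cast_nonneg v
    have hdx : (0:ℝ) < (x + v) ^ 2 * (x + v + 1) := by positivity
    have hdy : (0:ℝ) < (y + v) ^ 2 * (y + v + 1) := by positivity
    rw [div_le_div_iff₀ hdx hdy]
    have hab : x * (y + v) ≤ y * (x + v) := by nlinarith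
    have hcd : x * (y + v + 1) ≤ y * (x + v + 1) := by nlinarith
    have ha0 : (0:ℝ) ≤ x * (y + v) := by positivity
    have hc0 : (0:ℝ) ≤ x * (y + v + 1) := by positivity
    have hb0 : (0:ℝ) ≤ y * (x + v) := by positivity
    have key : (x * (y + v)) ^ 2 * (x * (y + v + 1))
        ≤ (y * (x + v)) ^ 2 * (y * (x + v + 1)) := by
      apply mul_le_mul (by nlinarith) hcd hc0 (by positivity)
    nlinarith [key]
  apply Summable.tsum_lt_tsum hle (i := 1) _ (summable_g hx) (summable_g hy)
  · have hdx : (0:ℝ) < (x + 1) ^ 2 * (x + 1 + 1) := by positivity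
    have hdy : (0:ℝ) < (y + 1) ^ 2 * (y + 1 + 1) := by positivity
    push_cast
    rw [div_lt_div_iff₀ hdx hdy]
    have hab : x * (y + 1) < y * (x + 1) := by nlinarith
    have hcd : x * (y + 2) < y * (x + 2) := by nlinarith
    have key : (x * (y + 1)) ^ 2 * (x * (y + 2))
        < (y * (x + 1)) ^ 2 * (y * (x + 2)) := by
      apply mul_lt_mul'' (by nlinarith [mul_pos hx (by linarith : (0:ℝ) < y+1)]) hcd
        (by positivity) (by positivity)
    nlinarith [key]
end

section
/- The function ϖ(s) = 3∫₀^s z/(1 − e^{−z}) dz − s²/(1 − e^{−s}) − 2s is positive for all s > 0. -/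
open Real MeasureTheory Set Filter intervalIntegral
lemma pg_pos {z : ℝ} (hz : 0 < z) : 0 < 1 - Real.exp (-z) := by
  have h := Real.exp_lt_one_iff.mpr (by linarith : -z < 0)
  linarith

lemma pg_le {z : ℝ} (hz : 0 < z) : 1 - Real.exp (-z) ≤ z := by
  have := Real.add_one_le_exp (-z); linarith

lemma pexp_mul {z : ℝ} : Real.exp z * Real.exp (-z) = 1 := by
  rw [← Real.exp_add]; simp

lemma pg_ge {z : ℝ} (hz : 0 < z) : z * Real.exp (-z) ≤ 1 - Real.exp (-z) := by
  have h1 := Real.add_one_le_exp z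
  have h2 := Real.exp_pos (-z)
  nlinarith [pexp_mul (z := z)]

lemma pf_ge_one {z : ℝ} (hz : 0 < z) : 1 ≤ z / (1 - Real.exp (-z)) :=
  (one_le_div (pg_pos hz)).mpr (pg_le hz)

lemma pf_le_exp {z : ℝ} (hz : 0 < z) : z / (1 - Real.exp (-z)) ≤ Real.exp z := by
  rw [div_le_iff₀ (pg_pos hz)]
  nlinarith [pg_ge hz, Real.exp_pos z, pexp_mul (z := z),
    mul_le_mul_of_nonneg_left (pg_ge hz) (Real.exp_pos z).le]

lemma pf_meas : Measurable (fun z : ℝ => z / (1 - Real.exp (-z))) :=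
  measurable_id.div (measurable_const.sub (Real.measurable_exp.comp measurable_neg))

lemma pf_intable {s : ℝ} (hs : 0 < s) :
    IntervalIntegrable (fun z : ℝ => z / (1 - Real.exp (-z))) volume 0 s := by
  rw [intervalIntegrable_iff_integrableOn_Ioc_of_le hs.le]
  refine Integrable.mono' (integrable_const (Real.exp s)) pf_meas.aestronglyMeasurable ?_
  filter_upwards [ae_restrict_mem measurableSet_Ioc] with z hz
  rw [Real.norm_eq_abs, abs_of_nonneg (le_trans zero_le_one (pf_ge_one hz.1))]
  exact le_trans (pf_le_exp hz.1) (Real.exp_le_exp.mpr hz.2)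

lemma pf_cont {s : ℝ} (hs : 0 < s) :
    ContinuousAt (fun z : ℝ => z / (1 - Real.exp (-z))) s :=
  ContinuousAt.div continuousAt_id (by fun_prop) (ne_of_gt (pg_pos hs))


noncomputable def pH0 (s : ℝ) : ℝ := (Real.exp s)^2*(s-2) + Real.exp s*(s^2-s+4) - 2
noncomputable def pH1 (s : ℝ) : ℝ := (Real.exp s)^2*(2*s-3) + Real.exp s*(s^2+s+3)
noncomputable def pH2 (s : ℝ) : ℝ := (Real.exp s)^2*(4*s-4) + Real.exp s*(s^2+3*s+4)
noncomputable def pK (s : ℝ) : ℝ := Real.exp s*(8*s-4) + (s^2+5*s+7)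

lemma hE2 (s : ℝ) : HasDerivAt (fun s : ℝ => (Real.exp s)^2) (2*(Real.exp s)^2) s := by
  have := (Real.hasDerivAt_exp s).pow 2
  exact this.congr_deriv (by ring)

lemma hdK (s : ℝ) : HasDerivAt pK (Real.exp s*(8*s+4) + (2*s+5)) s := by
  unfold pK
  have h1 := (Real.hasDerivAt_exp s).mul ((hasDerivAt_id' s).const_mul 8 |>.sub_const 4)
  have h2 : HasDerivAt (fun s : ℝ => s^2+5*s+7) (2*s+5) s := by
    have := ((hasDerivAt_pow 2 s).add ((hasDerivAt_id' s).const_mul 5)).add_const 7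
    exact this.congr_deriv (by ring)
  exact (h1.add h2).congr_deriv (by ring)

lemma hdH2 (s : ℝ) : HasDerivAt pH2 (Real.exp s * pK s) s := by
  unfold pH2 pK
  have h1 := (hE2 s).mul ((hasDerivAt_id' s).const_mul 4 |>.sub_const 4)
  have h2 : HasDerivAt (fun s : ℝ => s^2+3*s+4) (2*s+3) s := by
    have := ((hasDerivAt_pow 2 s).add ((hasDerivAt_id' s).const_mul 3)).add_const 4
    exact this.congr_deriv (by ring)
  exact (h1.add ((Real.hasDerivAt_exp s).mul h2)).congr_deriv (by ring)

lemma hdH1 (s : ℝ) : HasDerivAt pH1 (pH2 s) s := by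
  unfold pH1 pH2
  have h1 := (hE2 s).mul ((hasDerivAt_id' s).const_mul 2 |>.sub_const 3)
  have h2 : HasDerivAt (fun s : ℝ => s^2+s+3) (2*s+1) s := by
    have := ((hasDerivAt_pow 2 s).add (hasDerivAt_id' s)).add_const 3
    exact this.congr_deriv (by ring)
  exact (h1.add ((Real.hasDerivAt_exp s).mul h2)).congr_deriv (by ring)

lemma hdH0 (s : ℝ) : HasDerivAt pH0 (pH1 s) s := by
  unfold pH0 pH1
  have h1 := (hE2 s).mul ((hasDerivAt_id' s).sub_const 2)
  have h2 : HasDerivAt (fun s : ℝ => s^2-s+4) (2*s-1) s := by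
    have := ((hasDerivAt_pow 2 s).sub (hasDerivAt_id' s)).add_const 4
    exact this.congr_deriv (by ring)
  exact ((h1.add ((Real.hasDerivAt_exp s).mul h2)).sub_const 2).congr_deriv (by ring)

lemma aux_pos (F F' : ℝ → ℝ) (h0 : 0 ≤ F 0) (hd : ∀ s, HasDerivAt F (F' s) s)
    (hp : ∀ s, 0 < s → 0 < F' s) : ∀ s, 0 < s → 0 < F s := by
  intro s hs
  have mono : StrictMonoOn F (Ici 0) := by
    apply strictMonoOn_of_deriv_pos (convex_Ici 0)
    · exact Continuous.continuousOn (by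
        rw [continuous_iff_continuousAt]; exact fun x => (hd x).continuousAt)
    · intro x hx
      rw [interior_Ici] at hx
      rw [(hd x).deriv]
      exact hp x hx
  have := mono (self_mem_Ici) (le_of_lt hs) hs
  linarith

lemma pK_pos : ∀ s, 0 < s → 0 < pK s := by
  apply aux_pos pK (fun s => Real.exp s*(8*s+4) + (2*s+5)) _ hdK
  · intro s hs; nlinarith [Real.exp_pos s]
  · unfold pK; simp; norm_num

lemma pH2_pos : ∀ s, 0 < s → 0 < pH2 s := by
  apply aux_pos pH2 (fun s => Real.exp s * pK s) _ hdH2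
  · intro s hs; exact mul_pos (Real.exp_pos s) (pK_pos s hs)
  · unfold pH2; simp

lemma pH1_pos : ∀ s, 0 < s → 0 < pH1 s := by
  apply aux_pos pH1 pH2 _ hdH1
  · exact pH2_pos
  · unfold pH1; simp

lemma pH0_pos : ∀ s, 0 < s → 0 < pH0 s := by
  apply aux_pos pH0 pH1 _ hdH0
  · exact pH1_pos
  · unfold pH0; norm_num

noncomputable def pPhi (s : ℝ) : ℝ :=
  3 * (∫ z in (0:ℝ)..s, z / (1 - Real.exp (-z))) - s ^ 2 / (1 - Real.exp (-s)) - 2 * s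

noncomputable def pPsi (s : ℝ) : ℝ :=
  3 * (s / (1 - Real.exp (-s))) -
    (2*s * (1 - Real.exp (-s)) - s^2 * Real.exp (-s)) / (1 - Real.exp (-s))^2 - 2

lemma pPhi_hasDeriv {s : ℝ} (hs : 0 < s) : HasDerivAt pPhi (pPsi s) s := by
  have hF : HasDerivAt (fun u => ∫ z in (0:ℝ)..u, z / (1 - Real.exp (-z)))
      (s / (1 - Real.exp (-s))) s :=
    integral_hasDerivAt_right (pf_intable hs)
      (pf_meas.stronglyMeasurable.stronglyMeasurableAtFilter) (pf_cont hs)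
  have hg : HasDerivAt (fun s : ℝ => 1 - Real.exp (-s)) (Real.exp (-s)) s := by
    have h := ((Real.hasDerivAt_exp (-s)).comp s (hasDerivAt_neg s)).const_sub 1
    exact h.congr_deriv (by ring)
  have hq : HasDerivAt (fun s : ℝ => s ^ 2 / (1 - Real.exp (-s)))
      ((2*s * (1 - Real.exp (-s)) - s^2 * Real.exp (-s)) / (1 - Real.exp (-s))^2) s := by
    have h := (hasDerivAt_pow 2 s).div hg (ne_of_gt (pg_pos hs))
    exact h.congr_deriv (by ring)
  have := ((hF.const_mul 3).sub hq).sub ((hasDerivAt_id' s).const_mul 2)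
  exact this.congr_deriv (by unfold pPsi; ring)

lemma pPsi_pos {s : ℝ} (hs : 0 < s) : 0 < pPsi s := by
  have hg := pg_pos hs
  have hx := Real.exp_pos s
  have hee : Real.exp s * Real.exp (-s) = 1 := pexp_mul
  have hN : 0 < s * (1 - Real.exp (-s)) + s^2 * Real.exp (-s) - 2 * (1 - Real.exp (-s))^2 := by
    have h0 := pH0_pos s hs
    have hid : pH0 s = (Real.exp s)^2 *
        (s * (1 - Real.exp (-s)) + s^2 * Real.exp (-s) - 2 * (1 - Real.exp (-s))^2) := by
      unfold pH0
      linear_combination (Real.exp s * (s - s^2 - 4) + 2*(Real.exp s * Real.exp (-s)) + 2) * hee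
    rw [hid] at h0
    by_contra h; push_neg at h
    nlinarith [sq_nonneg (Real.exp s)]
  have hψ : pPsi s = (s * (1 - Real.exp (-s)) + s^2 * Real.exp (-s)
      - 2 * (1 - Real.exp (-s))^2) / (1 - Real.exp (-s))^2 := by
    unfold pPsi; field_simp; ring
  rw [hψ]
  exact div_pos hN (by positivity)

lemma pPhi_mono : StrictMonoOn pPhi (Ioi 0) := by
  apply strictMonoOn_of_deriv_pos (convex_Ioi 0)
  · intro x hx; exact ((pPhi_hasDeriv hx).continuousAt).continuousWithinAt
  · intro x hx
    rw [interior_Ioi] at hx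
    rw [(pPhi_hasDeriv hx).deriv]
    exact pPsi_pos hx

lemma pPhi_lb {t : ℝ} (ht : 0 < t) : t * (1 - Real.exp t) ≤ pPhi t := by
  have hint : (t:ℝ) ≤ ∫ z in (0:ℝ)..t, z / (1 - Real.exp (-z)) := by
    have h0 : ∀ᵐ z : ℝ, z ≠ 0 := by
      rw [ae_iff]
      convert Real.volume_singleton (a := 0) using 2
      ext x; simp
    have hae : (fun _ : ℝ => (1:ℝ)) ≤ᵐ[volume.restrict (Icc 0 t)]
        (fun z : ℝ => z / (1 - Real.exp (-z))) := by
      filter_upwards [ae_restrict_mem measurableSet_Icc, ae_restrict_of_ae h0] with z hz hz0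
      exact pf_ge_one (lt_of_le_of_ne hz.1 (Ne.symm hz0))
    have := integral_mono_ae_restrict ht.le intervalIntegrable_const (pf_intable ht) hae
    simpa using this
  have hquot : t ^ 2 / (1 - Real.exp (-t)) ≤ t * Real.exp t := by
    rw [div_le_iff₀ (pg_pos ht)]
    have h1 : 0 ≤ t * Real.exp t * ((1 - Real.exp (-t)) - t * Real.exp (-t)) :=
      mul_nonneg (by positivity) (by linarith [pg_ge ht])
    nlinarith [pexp_mul (z := t)]
  unfold pPhi
  nlinarith

lemma pPhi_nonneg {s : ℝ} (hs : 0 < s) : 0 ≤ pPhi s := by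
  have htend : Tendsto (fun t : ℝ => t * (1 - Real.exp t)) (nhdsWithin 0 (Ioi 0)) (nhds 0) := by
    have hc : Continuous (fun t : ℝ => t * (1 - Real.exp t)) :=
      continuous_id.mul (continuous_const.sub Real.continuous_exp)
    have := (hc.tendsto 0).mono_left (nhdsWithin_le_nhds (s := Ioi 0))
    simpa using this
  refine le_of_tendsto htend ?_
  filter_upwards [Ioo_mem_nhdsGT_of_mem (by constructor <;> simp [hs] : (0:ℝ) ∈ Ico 0 s)]
    with t ht
  exact le_trans (pPhi_lb ht.1) (pPhi_mono (mem_Ioi.mpr ht.1) (mem_Ioi.mpr hs) ht.2).le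

theorem stmt_6 : ∀ s : ℝ, 0 < s →
    0 < 3 * (∫ z in (0 : ℝ)..s, z / (1 - Real.exp (-z))) -
        s ^ 2 / (1 - Real.exp (-s)) - 2 * s := by
  intro s hs
  have h1 : 0 ≤ pPhi (s/2) := pPhi_nonneg (by linarith)
  have h2 : pPhi (s/2) < pPhi s :=
    pPhi_mono (mem_Ioi.mpr (by linarith)) (mem_Ioi.mpr hs) (by linarith)
  have : 0 < pPhi s := lt_of_le_of_lt h1 h2
  unfold pPhi at this
  exact this
end

section
/- The function x ↦ x·ψ₁(x) is strictly decreasing on (0, ∞), where ψ₁ is the trigamma function. -/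
lemma xv_pos {x : ℝ} (hx : 0 < x) (v : ℕ) : 0 < x + v := by positivity

lemma summable_pow {x : ℝ} (hx : 0 < x) {p : ℕ} (hp : 2 ≤ p) :
    Summable (fun v : ℕ => 1 / (x + v) ^ p) := by
  have hc : 0 < min x 1 := lt_min hx one_pos
  have hs : Summable (fun v : ℕ => 1 / ((v : ℝ) + 1) ^ p) := by
    have := Real.summable_one_div_nat_pow.2 (show 1 < p by omega)
    have h2 := (summable_nat_add_iff (f := fun n : ℕ => 1 / (n : ℝ) ^ p) 1).2 this
    simpa using h2
  apply Summable.of_nonneg_of_le (f := fun v : ℕ => (1 / (min x 1) ^ p) * (1 / ((v : ℝ) + 1) ^ p)) (fun v => by positivity) ?_ (hs.mul_left _)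
  intro v
  have hle : min x 1 * ((v : ℝ) + 1) ≤ x + v := by
    have h1 : min x 1 ≤ x := min_le_left _ _
    have h2 : min x 1 * v ≤ v := by
      nlinarith [min_le_right x 1, Nat.cast_nonneg (α := ℝ) v]
    nlinarith
  have hpos : (0:ℝ) < min x 1 * ((v : ℝ) + 1) := by positivity
  have := pow_le_pow_left₀ hpos.le hle p
  rw [mul_pow] at this
  show 1 / (x + ↑v) ^ p ≤ 1 / (x ⊓ 1) ^ p * (1 / (↑v + 1) ^ p)
  rw [div_mul_div_comm, one_mul]
  apply one_div_le_one_div_of_le (by positivity) this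

lemma telescope_s7 {f : ℕ → ℝ} (hf : ∀ n, f (n + 1) ≤ f n)
    (h0 : Filter.Tendsto f Filter.atTop (nhds 0)) :
    HasSum (fun v => f v - f (v + 1)) (f 0) := by
  rw [hasSum_iff_tendsto_nat_of_nonneg (fun i => sub_nonneg.2 (hf i))]
  have : ∀ n, ∑ i ∈ Finset.range n, (f i - f (i + 1)) = f 0 - f n := by
    intro n; exact Finset.sum_range_sub' f n
  simp only [this]
  simpa using tendsto_const_nhds.sub h0

lemma tendsto_one_div_xv {x : ℝ} (hx : 0 < x) {p : ℕ} (hp : 1 ≤ p) :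
    Filter.Tendsto (fun v : ℕ => 1 / (x + v) ^ p) Filter.atTop (nhds 0) := by
  apply Filter.Tendsto.comp (tendsto_const_nhds.div_atTop Filter.tendsto_id)
  apply Filter.Tendsto.comp (Filter.tendsto_pow_atTop (n := p) (by omega))
  apply Filter.tendsto_atTop_add_const_left
  exact tendsto_natCast_atTop_atTop

lemma hasSum_telescope1 {x : ℝ} (hx : 0 < x) :
    HasSum (fun v : ℕ => 1 / (x + v) - 1 / (x + v + 1)) (1 / x) := by
  have h := telescope_s7 (f := fun v : ℕ => 1 / (x + v)) ?_ ?_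
  · simpa [add_assoc] using h
  · intro n
    apply one_div_le_one_div_of_le (xv_pos hx n)
    push_cast; linarith
  · simpa using tendsto_one_div_xv hx (p := 1) le_rfl

lemma trigamma_lt {x : ℝ} (hx : 0 < x) : trigamma x < 1 / x + 1 / x ^ 2 := by
  have hsum := summable_pow hx (p := 2) le_rfl
  have hshift : trigamma x = 1 / x ^ 2 + ∑' v : ℕ, 1 / (x + (v + 1)) ^ 2 := by
    unfold trigamma
    rw [Summable.tsum_eq_zero_add hsum]
    push_cast
    norm_num
  rw [hshift]
  have key : (∑' v : ℕ, 1 / (x + (v + 1)) ^ 2) < 1 / x := by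
    rw [← (hasSum_telescope1 hx).tsum_eq]
    apply Summable.tsum_lt_tsum_of_nonneg (i := 0)
    · intro v; positivity
    · intro v
      have h1 : (0:ℝ) < x + v := xv_pos hx v
      have h2 : (0:ℝ) < x + v + 1 := by linarith
      rw [div_sub_div _ _ (ne_of_gt h1) (ne_of_gt h2)]
      rw [div_le_div_iff₀ (by positivity) (by positivity)]
      push_cast
      ring_nf
      nlinarith
    · have h1 : (0:ℝ) < x := hx
      have h2 : (0:ℝ) < x + 1 := by linarith
      simp only [Nat.cast_zero, add_zero]
      rw [div_sub_div _ _ (ne_of_gt h1) (ne_of_gt h2)]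
      rw [div_lt_div_iff₀ (by positivity) (by positivity)]
      push_cast
      nlinarith
    · exact (hasSum_telescope1 hx).summable
  linarith

lemma cube_ge {x : ℝ} (hx : 0 < x) :
    1 / (2 * x ^ 2) + 1 / (2 * x ^ 3) ≤ ∑' v : ℕ, 1 / (x + v) ^ 3 := by
  have hsum := summable_pow hx (p := 3) (by norm_num)
  -- telescoping series for 1/(2x^2)
  have htel : HasSum (fun v : ℕ => 1 / (2 * (x + v) ^ 2) - 1 / (2 * (x + v + 1) ^ 2))
      (1 / (2 * x ^ 2)) := by
    have h := telescope_s7 (f := fun v : ℕ => 1 / (2 * (x + v) ^ 2)) ?_ ?_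
    · simpa [add_assoc] using h
    · intro n
      apply one_div_le_one_div_of_le (by positivity)
      have : (0:ℝ) < x + n := xv_pos hx n
      push_cast; nlinarith
    · have := tendsto_one_div_xv hx (p := 2) (by norm_num)
      have h2 := this.div_const 2
      simp only [div_div] at h2 ⊢
      simpa [mul_comm] using h2
  -- trapezoid sum: ∑ (f v + f (v+1))/2 = ∑ f - f 0 / 2
  set f : ℕ → ℝ := fun v => 1 / (x + v) ^ 3 with hf
  have hsum1 : Summable (fun v : ℕ => f (v + 1)) := by
    exact (summable_nat_add_iff 1).2 hsum
  have htsum1 : ∑' v : ℕ, f (v + 1) = (∑' v, f v) - f 0 := by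
    have := Summable.tsum_eq_zero_add hsum
    linarith [this]
  have htrap : ∑' v : ℕ, (f v / 2 + f (v + 1) / 2) = (∑' v, f v) - f 0 / 2 := by
    rw [Summable.tsum_add (hsum.div_const 2) (hsum1.div_const 2), tsum_div_const, tsum_div_const,
      htsum1]
    ring
  -- termwise: trapezoid ≥ telescoping integral
  have hterm : ∀ v : ℕ, 1 / (2 * (x + v) ^ 2) - 1 / (2 * (x + v + 1) ^ 2)
      ≤ f v / 2 + f (v + 1) / 2 := by
    intro v
    have ha : (0:ℝ) < x + v := xv_pos hx v
    have hb : (0:ℝ) < x + v + 1 := by linarith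
    have key : ∀ a b : ℝ, 0 < a → b = a + 1 →
        1 / (2 * a ^ 2) - 1 / (2 * b ^ 2) ≤ 1 / a ^ 3 / 2 + 1 / b ^ 3 / 2 := by
      intro a b hap hba
      have hbp : 0 < b := by linarith
      have hR : 1 / a ^ 3 / 2 + 1 / b ^ 3 / 2 = (a ^ 3 + b ^ 3) / (2 * (a ^ 3 * b ^ 3)) := by
        field_simp; ring
      rw [hR, div_sub_div _ _ (by positivity) (by positivity)]
      rw [div_le_div_iff₀ (by positivity) (by positivity)]
      have h1 : a ^ 3 + b ^ 3 ≥ (a + b) * (a * b) := by nlinarith [sq_nonneg (a - b)]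
      have h2 : (1 * (2 * b ^ 2) - 2 * a ^ 2 * 1) = (b - a) * (b + a) * 2 := by ring
      subst hba
      nlinarith [pow_pos hap 2, pow_pos hap 3, mul_pos (pow_pos hap 2) (pow_pos hap 3)]
    have := key (x + v) (x + v + 1) ha rfl
    simp only [hf]
    push_cast
    convert this using 3 <;> ring
  have hle := Summable.tsum_le_tsum hterm htel.summable
    ((hsum.div_const 2).add (hsum1.div_const 2))
  rw [htel.tsum_eq, htrap] at hle
  have hf0 : f 0 = 1 / x ^ 3 := by simp [hf]
  rw [hf0] at hle
  have : 1 / (2 * x ^ 3) = (1 / x ^ 3) / 2 := by ring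
  linarith

lemma hasDerivAt_trigamma {x : ℝ} (hx : 0 < x) : HasDerivAt trigamma (tetragamma x) x := by
  set t : Set ℝ := Set.Ioi (x / 2) with ht
  have hx2 : 0 < x / 2 := by linarith
  have hg : ∀ (n : ℕ) (y : ℝ), y ∈ t → HasDerivAt (fun z : ℝ => 1 / (z + n) ^ 2)
      (-2 / (y + n) ^ 3) y := by
    intro n y hy
    have hyn : (0:ℝ) < y + n := by
      have h1 : x / 2 < y := hy
      have h2 : (0:ℝ) ≤ (n:ℝ) := Nat.cast_nonneg n
      linarith
    have h1 : HasDerivAt (fun z : ℝ => (z + n) ^ 2) (2 * (y + n)) y := by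
      have := ((hasDerivAt_id y).add_const (n : ℝ)).pow 2
      simpa [Pi.pow_def] using this
    have h2 := h1.inv (by positivity)
    have heq : -(2 * (y + n)) / ((y + n) ^ 2) ^ 2 = -2 / (y + n) ^ 3 := by
      rw [div_eq_div_iff (by positivity) (by positivity)]
      ring
    simp only [one_div]
    rw [← heq]
    exact h2
  have hderiv := hasDerivAt_tsum_of_isPreconnected
    (u := fun n : ℕ => 2 / (x / 2 + n) ^ 3)
    (by simpa [div_eq_mul_inv] using (summable_pow hx2 (p := 3) (by norm_num)).mul_left 2)
    isOpen_Ioi (isPreconnected_Ioi) hg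
    (fun n y hy => by
      have hy' : x / 2 < y := hy
      have hn0 : (0:ℝ) ≤ (n:ℝ) := Nat.cast_nonneg n
      have hyn : (0:ℝ) < y + n := by linarith
      have h2 : (0:ℝ) < x / 2 + n := by positivity
      rw [Real.norm_eq_abs, abs_div, abs_neg, abs_two, abs_of_pos (by positivity)]
      apply div_le_div_of_nonneg_left (by norm_num) (by positivity)
      apply pow_le_pow_left₀ h2.le (by linarith))
    (y₀ := x) (by simp [ht]; linarith) (summable_pow hx (p := 2) le_rfl)
    (y := x) (by simp [ht]; linarith)
  have : (∑' n : ℕ, -2 / (x + n) ^ 3) = tetragamma x := by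
    unfold tetragamma
    rw [← tsum_mul_left]
    congr 1; ext n; ring
  rw [this] at hderiv
  exact hderiv

theorem stmt_7 : StrictAntiOn (fun x : ℝ => x * trigamma x) (Set.Ioi 0) := by
  have hderiv : ∀ x ∈ Set.Ioi (0:ℝ), HasDerivAt (fun x : ℝ => x * trigamma x)
      (trigamma x + x * tetragamma x) x := by
    intro x hx
    have h := (hasDerivAt_id x).mul (hasDerivAt_trigamma hx)
    simpa [add_comm, Pi.mul_def] using h
  apply strictAntiOn_of_deriv_neg (convex_Ioi 0)
  · intro x hx
    exact (hderiv x hx).differentiableAt.continuousAt.continuousWithinAt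
  · intro x hx
    rw [interior_Ioi] at hx
    have hxp : 0 < x := hx
    rw [(hderiv x hx).deriv]
    have h1 := trigamma_lt hxp
    have h2 := cube_ge hxp
    have h3 : x * tetragamma x = -2 * x * ∑' v : ℕ, 1 / (x + v) ^ 3 := by
      unfold tetragamma; ring
    rw [h3]
    have h4 : 2 * x * (1 / (2 * x ^ 2) + 1 / (2 * x ^ 3)) = 1 / x + 1 / x ^ 2 := by
      field_simp
    nlinarith
end

section
/- For all real numbers y > x > 0, x·ψ₁(x) − 2y·ψ₁(y) − y²·ψ₂(y) > 0, where ψ₁ and ψ₂ are the polygamma functions of orders one and two. -/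
/-!
Both sides are compared with the constant 1. Comparing termwise with the telescoping series
∑ 1/((x+v)(x+v+1)) = 1/x gives x ψ₁(x) > 1. On the other side,
2y ψ₁(y) + y² ψ₂(y) = 2y ∑ v/(y+v)³, and v/(y+v)³ is dominated by the differences of
d_j = (y+2j+1)/(2(y+j)(y+j+1)), j = v - 1, which telescope to d₀ = 1/(2y).
-/

open Filter Topology

theorem hasSum_sub_succ_of_antitone {d : ℕ → ℝ} (hd : Antitone d)
    (hlim : Tendsto d atTop (𝓝 0)) : HasSum (fun n ↦ d n - d (n + 1)) (d 0) := by
  rw [hasSum_iff_tendsto_nat_of_nonneg fun n ↦ sub_nonneg.2 (hd n.le_succ)]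
  simp_rw [Finset.sum_range_sub']
  simpa using tendsto_const_nhds.sub hlim

theorem tsum_le_of_le_sub_succ {f d : ℕ → ℝ} (hf : ∀ n, 0 ≤ f n) (hd : ∀ n, 0 ≤ d n)
    (h : ∀ n, f n ≤ d n - d (n + 1)) : ∑' n, f n ≤ d 0 :=
  Real.tsum_le_of_sum_range_le hf fun n ↦
    calc ∑ i ∈ Finset.range n, f i ≤ ∑ i ∈ Finset.range n, (d i - d (i + 1)) :=
          Finset.sum_le_sum fun i _ ↦ h i
      _ = d 0 - d n := Finset.sum_range_sub' d n
      _ ≤ d 0 := sub_le_self _ (hd n)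

theorem summable_one_div_add_pow {x : ℝ} (hx : 0 < x) {p : ℕ} (hp : 1 < p) :
    Summable fun v : ℕ ↦ 1 / (x + v) ^ p := by
  have := (Real.summable_one_div_nat_add_rpow x p).2 (by exact_mod_cast hp)
  refine this.congr fun v ↦ ?_
  rw [abs_of_pos (by positivity), Real.rpow_natCast, add_comm]

theorem inv_lt_trigamma {x : ℝ} (hx : 0 < x) : x⁻¹ < trigamma x := by
  have htel : HasSum (fun v : ℕ ↦ 1 / (x + v) - 1 / (x + (v + 1 : ℕ))) x⁻¹ := by
    have hd : Antitone fun v : ℕ ↦ 1 / (x + v) := fun m n hmn ↦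
      one_div_le_one_div_of_le (by positivity) (by gcongr)
    have hlim : Tendsto (fun v : ℕ ↦ 1 / (x + v)) atTop (𝓝 0) :=
      tendsto_const_nhds.div_atTop (tendsto_atTop_add_const_left _ x tendsto_natCast_atTop_atTop)
    simpa using hasSum_sub_succ_of_antitone hd hlim
  have hterm (v : ℕ) : 1 / (x + v) - 1 / (x + (v + 1 : ℕ)) < 1 / (x + v) ^ 2 := by
    have : 0 < x + v := by positivity
    rw [div_sub_div _ _ this.ne' (by positivity), div_lt_div_iff₀ (by positivity) (by positivity)]
    push_cast
    nlinarith
  exact hasSum_lt (fun v ↦ (hterm v).le) (hterm 0) htel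
    (summable_one_div_add_pow hx one_lt_two).hasSum

theorem trigamma_add_half_mul_tetragamma {y : ℝ} (hy : 0 < y) :
    trigamma y + y / 2 * tetragamma y = ∑' v : ℕ, v / (y + v) ^ 3 := by
  have h2 := summable_one_div_add_pow hy one_lt_two
  have h3 := (summable_one_div_add_pow hy (by norm_num : 1 < 3)).mul_left y
  have hscale : y / 2 * tetragamma y = -∑' v : ℕ, y * (1 / (y + v) ^ 3) := by
    rw [tetragamma, tsum_mul_left]
    ring
  rw [trigamma, hscale, ← sub_eq_add_neg, ← h2.tsum_sub h3]
  refine tsum_congr fun v ↦ ?_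
  have : y + v ≠ 0 := by positivity
  field_simp
  ring

theorem tsum_div_add_pow_three_le {y : ℝ} (hy : 0 < y) :
    ∑' v : ℕ, v / (y + v) ^ 3 ≤ 1 / (2 * y) := by
  have hsum : Summable fun v : ℕ ↦ (v : ℝ) / (y + v) ^ 3 := by
    refine (summable_one_div_add_pow hy one_lt_two).of_nonneg_of_le (fun v ↦ by positivity)
      fun v ↦ ?_
    have : 0 < y + v := by positivity
    rw [div_le_div_iff₀ (by positivity) (by positivity)]
    nlinarith
  -- discrete analogue of `∫ s in t..∞, s / (y + s) ^ 3 = (y + 2t) / (2 (y + t) ^ 2)` at `t = j + 1/2`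
  set d : ℕ → ℝ := fun j ↦ (y + 2 * j + 1) / (2 * (y + j) * (y + j + 1))
  have hd (j : ℕ) : 0 ≤ d j := by positivity
  have hstep (j : ℕ) : ((j + 1 : ℕ) : ℝ) / (y + (j + 1 : ℕ)) ^ 3 ≤ d j - d (j + 1) := by
    have h0 : 0 < y + j := by positivity
    have hdiff : d j - d (j + 1) = (j + 1) / ((y + j) * (y + j + 1) * (y + j + 2)) := by
      simp only [d]
      push_cast
      field_simp
      ring
    rw [hdiff, div_le_div_iff₀ (by positivity) (by positivity)]
    push_cast
    nlinarith [mul_pos h0 h0]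
  calc ∑' v : ℕ, (v : ℝ) / (y + v) ^ 3 = ∑' j : ℕ, ((j + 1 : ℕ) : ℝ) / (y + (j + 1 : ℕ)) ^ 3 := by
        simp [hsum.tsum_eq_zero_add]
    _ ≤ d 0 := tsum_le_of_le_sub_succ (fun j ↦ by positivity) hd hstep
    _ = 1 / (2 * y) := by
        simp only [d]
        field_simp
        ring

theorem stmt_9 : ∀ x y : ℝ, 0 < x → x < y →
    x * trigamma x - 2 * y * trigamma y - y ^ 2 * tetragamma y > 0 := by
  intro x y hx hxy
  have hy : 0 < y := hx.trans hxy
  have hx_trigamma : 1 < x * trigamma x := by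
    simpa [hx.ne'] using mul_lt_mul_of_pos_left (inv_lt_trigamma hx) hx
  have hy_bound : 2 * y * trigamma y + y ^ 2 * tetragamma y ≤ 1 := by
    calc 2 * y * trigamma y + y ^ 2 * tetragamma y
          = 2 * y * ∑' v : ℕ, v / (y + v) ^ 3 := by
            rw [← trigamma_add_half_mul_tetragamma hy]
            ring
      _ ≤ 2 * y * (1 / (2 * y)) :=
            mul_le_mul_of_nonneg_left (tsum_div_add_pow_three_le hy) (by positivity)
      _ = 1 := by field_simp
  linarith
end

section
/- The function x ↦ x²·ψ₁(x) is strictly convex on (0, ∞), where ψ₁ is the trigamma function. -/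
open Filter Set

lemma summable_shift {c : ℝ} (hc : 0 < c) {k : ℕ} (hk : 2 ≤ k) :
    Summable (fun v : ℕ => 1 / (c + v) ^ k) := by
  have base : Summable (fun n : ℕ => 1 / ((n : ℝ)) ^ 2) :=
    Real.summable_one_div_nat_pow.mpr one_lt_two
  have base1 : Summable (fun n : ℕ => 1 / ((n : ℝ) + 1) ^ 2) := by
    have := (summable_nat_add_iff (f := fun n : ℕ => 1 / ((n : ℝ)) ^ 2) 1).mpr base
    exact this.congr fun n => by push_cast; ring_nf
  refine (summable_nat_add_iff 1).mp (Summable.of_nonneg_of_le (fun v => by positivity) (fun v => ?_) base1)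
  have h1 : ((v : ℝ) + 1) ^ 2 ≤ (c + ((v : ℕ) + 1 : ℕ)) ^ k := by
    have e1 : ((v : ℝ) + 1) ^ 2 ≤ ((v : ℝ) + 1) ^ k :=
      pow_le_pow_right₀ (by push_cast; linarith [Nat.cast_nonneg (α:=ℝ) v]) hk
    have e2 : ((v : ℝ) + 1) ^ k ≤ (c + ((v : ℕ) + 1 : ℕ)) ^ k := by
      apply pow_le_pow_left₀ (by positivity)
      push_cast; linarith
    linarith
  have h2 : (0:ℝ) < ((v : ℝ) + 1) ^ 2 := by positivity
  exact one_div_le_one_div_of_le h2 h1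

lemma hasSum_telescope_s10 {φ : ℝ → ℝ} {z : ℝ}
    (hpos : ∀ n : ℕ, 0 ≤ φ (z + n))
    (hd : ∀ n : ℕ, 0 ≤ φ (z + n) - φ (z + n + 1))
    (hlim : Tendsto (fun n : ℕ => φ (z + n)) atTop (nhds 0)) :
    HasSum (fun v : ℕ => φ (z + v) - φ (z + v + 1)) (φ z) := by
  set d : ℕ → ℝ := fun v => φ (z + v) - φ (z + v + 1) with hdd
  have hsr : ∀ n, ∑ i ∈ Finset.range n, d i = φ z - φ (z + n) := by
    intro n
    have h := Finset.sum_range_sub' (f := fun i : ℕ => φ (z + i)) n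
    have e0 : z + ((0:ℕ):ℝ) = z := by push_cast; ring
    rw [e0] at h
    rw [← h]
    apply Finset.sum_congr rfl
    intro i _
    have e : z + ((i + 1 : ℕ) : ℝ) = z + i + 1 := by push_cast; ring
    simp only [hdd, e]
  have hb : ∀ n, ∑ i ∈ Finset.range n, d i ≤ φ z := by
    intro n; rw [hsr]; linarith [hpos n]
  have hS : Summable d := summable_of_sum_range_le hd hb
  have ht : Tendsto (fun n => ∑ i ∈ Finset.range n, d i) atTop (nhds (φ z)) := by
    simp only [hsr]
    simpa using tendsto_const_nhds.sub hlim
  have := tendsto_nhds_unique hS.hasSum.tendsto_sum_nat ht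
  exact this ▸ hS.hasSum

noncomputable def Fb (y : ℝ) : ℝ := 1/y + (1/2)*(1/y^2) + (1/6)*(1/y^3) - (1/30)*(1/y^5)
noncomputable def Gb (y : ℝ) : ℝ :=
  (1/2)*(1/y^2) + (1/2)*(1/y^3) + (1/4)*(1/y^4) - (1/12)*(1/y^6) + (1/12)*(1/y^8)
noncomputable def Lb (y : ℝ) : ℝ := (1/3)*(1/y^3) + (1/2)*(1/y^4) + (1/3)*(1/y^5) - (1/6)*(1/y^7)

lemma certA {y : ℝ} (hy : 1 ≤ y) : Fb y - Fb (y+1) ≤ 1/y^2 := by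
  have h0 : (0:ℝ) < y := by linarith
  have h1 : (0:ℝ) < y + 1 := by linarith
  have key : 1/y^2 - (Fb y - Fb (y+1)) = (5*y^2+5*y+1) / (30 * y^5 * (y+1)^5) := by
    unfold Fb; field_simp; ring
  nlinarith [key, div_nonneg (by positivity : (0:ℝ) ≤ 5*y^2+5*y+1)
    (by positivity : (0:ℝ) ≤ 30 * y^5 * (y+1)^5)]

lemma certB {y : ℝ} (hy : 1 ≤ y) : 1/y^3 ≤ Gb y - Gb (y+1) := by
  have h0 : (0:ℝ) < y := by linarith
  have h1 : (0:ℝ) < y + 1 := by linarith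
  have key : (Gb y - Gb (y+1)) - 1/y^3
      = (18*y^5+45*y^4+48*y^3+27*y^2+8*y+1) / (12 * y^8 * (y+1)^8) := by
    unfold Gb; field_simp; ring
  nlinarith [key, div_nonneg (by positivity : (0:ℝ) ≤ 18*y^5+45*y^4+48*y^3+27*y^2+8*y+1)
    (by positivity : (0:ℝ) ≤ 12 * y^8 * (y+1)^8)]

lemma certC {y : ℝ} (hy : 1 ≤ y) : Lb y - Lb (y+1) ≤ 1/y^4 := by
  have h0 : (0:ℝ) < y := by linarith
  have h1 : (0:ℝ) < y + 1 := by linarith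
  have key : 1/y^4 - (Lb y - Lb (y+1))
      = (12*y^4+24*y^3+19*y^2+7*y+1) / (6 * y^7 * (y+1)^7) := by
    unfold Lb; field_simp; ring
  nlinarith [key, div_nonneg (by positivity : (0:ℝ) ≤ 12*y^4+24*y^3+19*y^2+7*y+1)
    (by positivity : (0:ℝ) ≤ 6 * y^7 * (y+1)^7)]

lemma dF_nonneg {y : ℝ} (hy : 1 ≤ y) : 0 ≤ Fb y - Fb (y+1) := by
  have h0 : (0:ℝ) < y := by linarith
  have h1 : (0:ℝ) < y + 1 := by linarith
  have key : Fb y - Fb (y+1)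
      = (30*y^8+150*y^7+300*y^6+300*y^5+150*y^4+30*y^3-5*y^2-5*y-1)
        / (30 * y^5 * (y+1)^5) := by
    unfold Fb; field_simp; ring
  rw [key]
  apply div_nonneg _ (by positivity)
  have e1 : y ≤ y^3 := le_self_pow₀ hy (by norm_num)
  have e2 : y^2 ≤ y^3 := pow_le_pow_right₀ hy (by norm_num)
  have e4 : (1:ℝ) ≤ y^3 := one_le_pow₀ hy
  nlinarith [pow_nonneg h0.le 4, pow_nonneg h0.le 5, pow_nonneg h0.le 6,
    pow_nonneg h0.le 7, pow_nonneg h0.le 8]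

lemma dL_nonneg {y : ℝ} (hy : 1 ≤ y) : 0 ≤ Lb y - Lb (y+1) := by
  have h0 : (0:ℝ) < y := by linarith
  have h1 : (0:ℝ) < y + 1 := by linarith
  have key : Lb y - Lb (y+1)
      = (6*y^10+42*y^9+126*y^8+210*y^7+210*y^6+126*y^5+30*y^4-18*y^3-19*y^2-7*y-1)
        / (6 * y^7 * (y+1)^7) := by
    unfold Lb; field_simp; ring
  rw [key]
  apply div_nonneg _ (by positivity)
  have e1 : y ≤ y^5 := le_self_pow₀ hy (by norm_num)
  have e2 : y^2 ≤ y^5 := pow_le_pow_right₀ hy (by norm_num)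
  have e3 : y^3 ≤ y^5 := pow_le_pow_right₀ hy (by norm_num)
  have e4 : (1:ℝ) ≤ y^5 := one_le_pow₀ hy
  nlinarith [pow_nonneg h0.le 4, pow_nonneg h0.le 6, pow_nonneg h0.le 7,
    pow_nonneg h0.le 8, pow_nonneg h0.le 9, pow_nonneg h0.le 10]

lemma Fb_nonneg {y : ℝ} (hy : 1 ≤ y) : 0 ≤ Fb y := by
  have h0 : (0:ℝ) < y := by linarith
  have key : Fb y = (30*y^4+15*y^3+5*y^2-1) / (30*y^5) := by unfold Fb; field_simp; ring
  rw [key]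
  apply div_nonneg _ (by positivity)
  nlinarith [sq_nonneg y, one_le_pow₀ (n := 2) hy]

lemma Gb_nonneg {y : ℝ} (hy : 1 ≤ y) : 0 ≤ Gb y := by
  have h0 : (0:ℝ) < y := by linarith
  have key : Gb y = (6*y^6+6*y^5+3*y^4-y^2+1) / (12*y^8) := by unfold Gb; field_simp; ring
  rw [key]
  apply div_nonneg _ (by positivity)
  nlinarith [pow_le_pow_right₀ hy (show 2 ≤ 4 by norm_num)]

lemma Lb_nonneg {y : ℝ} (hy : 1 ≤ y) : 0 ≤ Lb y := by
  have h0 : (0:ℝ) < y := by linarith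
  have key : Lb y = (2*y^4+3*y^3+2*y^2-1) / (6*y^7) := by unfold Lb; field_simp; ring
  rw [key]
  apply div_nonneg _ (by positivity)
  nlinarith [one_le_pow₀ (n := 2) hy]

lemma tendsto_one_div_pow (z : ℝ) {k : ℕ} (hk : k ≠ 0) :
    Tendsto (fun n : ℕ => 1/(z+(n:ℝ))^k) atTop (nhds 0) := by
  have hb : Tendsto (fun n : ℕ => z + (n:ℝ)) atTop atTop :=
    tendsto_atTop_add_const_left _ z tendsto_natCast_atTop_atTop
  have h2 := (tendsto_pow_atTop hk).comp hb
  simpa [one_div, Function.comp_def, Pi.inv_def] using h2.inv_tendsto_atTop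

lemma tendsto_Fb (z : ℝ) : Tendsto (fun n : ℕ => Fb (z+(n:ℝ))) atTop (nhds 0) := by
  unfold Fb
  have t1 := tendsto_one_div_pow z (k := 1) one_ne_zero
  have t2 := tendsto_one_div_pow z (k := 2) two_ne_zero
  have t3 := tendsto_one_div_pow z (k := 3) three_ne_zero
  have t5 := tendsto_one_div_pow z (k := 5) (by norm_num)
  simp only [pow_one] at t1
  have := ((t1.add (t2.const_mul (1/2))).add (t3.const_mul (1/6))).sub (t5.const_mul (1/30))
  simpa using this

lemma tendsto_Gb (z : ℝ) : Tendsto (fun n : ℕ => Gb (z+(n:ℝ))) atTop (nhds 0) := by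
  unfold Gb
  have t2 := tendsto_one_div_pow z (k := 2) two_ne_zero
  have t3 := tendsto_one_div_pow z (k := 3) three_ne_zero
  have t4 := tendsto_one_div_pow z (k := 4) (by norm_num)
  have t6 := tendsto_one_div_pow z (k := 6) (by norm_num)
  have t8 := tendsto_one_div_pow z (k := 8) (by norm_num)
  have := ((((t2.const_mul (1/2)).add (t3.const_mul (1/2))).add
    (t4.const_mul (1/4))).sub (t6.const_mul (1/12))).add (t8.const_mul (1/12))
  simpa using this

lemma tendsto_Lb (z : ℝ) : Tendsto (fun n : ℕ => Lb (z+(n:ℝ))) atTop (nhds 0) := by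
  unfold Lb
  have t3 := tendsto_one_div_pow z (k := 3) three_ne_zero
  have t4 := tendsto_one_div_pow z (k := 4) (by norm_num)
  have t5 := tendsto_one_div_pow z (k := 5) (by norm_num)
  have t7 := tendsto_one_div_pow z (k := 7) (by norm_num)
  have := (((t3.const_mul (1/3)).add (t4.const_mul (1/2))).add
    (t5.const_mul (1/3))).sub (t7.const_mul (1/6))
  simpa using this

lemma one_le_shift {z : ℝ} (hz : 1 ≤ z) (n : ℕ) : 1 ≤ z + (n:ℝ) := by
  have : (0:ℝ) ≤ n := Nat.cast_nonneg n
  linarith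

lemma S2_ge {z : ℝ} (hz : 1 ≤ z) : Fb z ≤ ∑' v : ℕ, 1/(z+(v:ℝ))^2 := by
  have hz0 : (0:ℝ) < z := by linarith
  have htel : HasSum (fun v : ℕ => Fb (z+(v:ℝ)) - Fb (z+(v:ℝ)+1)) (Fb z) :=
    hasSum_telescope_s10 (fun n => Fb_nonneg (one_le_shift hz n))
      (fun n => dF_nonneg (one_le_shift hz n)) (tendsto_Fb z)
  rw [← htel.tsum_eq]
  exact Summable.tsum_le_tsum (fun v => certA (one_le_shift hz v)) htel.summable
    (summable_shift hz0 le_rfl)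

lemma S3_le {z : ℝ} (hz : 1 ≤ z) : (∑' v : ℕ, 1/(z+(v:ℝ))^3) ≤ Gb z := by
  have hz0 : (0:ℝ) < z := by linarith
  have hGnn : ∀ n : ℕ, 0 ≤ Gb (z+(n:ℝ)) := fun n => Gb_nonneg (one_le_shift hz n)
  have hdG : ∀ n : ℕ, 0 ≤ Gb (z+(n:ℝ)) - Gb (z+(n:ℝ)+1) := by
    intro n
    have h := certB (one_le_shift hz n)
    have : (0:ℝ) < 1/(z+(n:ℝ))^3 := by
      have := one_le_shift hz n; positivity
    linarith
  have htel : HasSum (fun v : ℕ => Gb (z+(v:ℝ)) - Gb (z+(v:ℝ)+1)) (Gb z) :=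
    hasSum_telescope_s10 hGnn hdG (tendsto_Gb z)
  rw [← htel.tsum_eq]
  exact Summable.tsum_le_tsum (fun v => certB (one_le_shift hz v))
    (summable_shift hz0 (by norm_num)) htel.summable

lemma S4_ge {z : ℝ} (hz : 1 ≤ z) : Lb z ≤ ∑' v : ℕ, 1/(z+(v:ℝ))^4 := by
  have hz0 : (0:ℝ) < z := by linarith
  have htel : HasSum (fun v : ℕ => Lb (z+(v:ℝ)) - Lb (z+(v:ℝ)+1)) (Lb z) :=
    hasSum_telescope_s10 (fun n => Lb_nonneg (one_le_shift hz n))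
      (fun n => dL_nonneg (one_le_shift hz n)) (tendsto_Lb z)
  rw [← htel.tsum_eq]
  exact Summable.tsum_le_tsum (fun v => certC (one_le_shift hz v)) htel.summable
    (summable_shift hz0 (by norm_num))

lemma key_pos {x : ℝ} (hx : 0 < x) :
    0 < ∑' v : ℕ, 2*(v:ℝ)*((v:ℝ)-2*x)/(x+(v:ℝ))^4 := by
  have hz1 : (1:ℝ) ≤ x + 1 := by linarith
  have hz0 : (0:ℝ) < x + 1 := by linarith
  set g : ℕ → ℝ := fun v => 2*(v:ℝ)*((v:ℝ)-2*x)/(x+(v:ℝ))^4 with hgdef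
  have s2 : Summable (fun v : ℕ => 1/((x+1)+(v:ℝ))^2) := summable_shift hz0 le_rfl
  have s3 : Summable (fun v : ℕ => 1/((x+1)+(v:ℝ))^3) := summable_shift hz0 (by norm_num)
  have s4 : Summable (fun v : ℕ => 1/((x+1)+(v:ℝ))^4) := summable_shift hz0 (by norm_num)
  have hterm : ∀ v : ℕ, g (v+1)
      = 2*(1/((x+1)+(v:ℝ))^2) - 8*x*(1/((x+1)+(v:ℝ))^3) + 6*x^2*(1/((x+1)+(v:ℝ))^4) := by
    intro v
    have hv : (0:ℝ) ≤ (v:ℝ) := Nat.cast_nonneg v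
    have h1 : x + ((v:ℝ)+1) ≠ 0 := by positivity
    have h2 : (x + 1) + (v:ℝ) ≠ 0 := by positivity
    simp only [hgdef]
    push_cast
    field_simp
    ring
  have sShift : Summable (fun v : ℕ => g (v+1)) := by
    refine Summable.congr ?_ (fun v => (hterm v).symm)
    exact ((s2.mul_left 2).sub (s3.mul_left (8*x))).add (s4.mul_left (6*x^2))
  have sg : Summable g := (summable_nat_add_iff 1).mp sShift
  have split : ∑' v, g v = g 0 + ∑' v, g (v+1) := Summable.tsum_eq_zero_add sg
  have g0 : g 0 = 0 := by simp [hgdef]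
  have eval : ∑' v, g (v+1)
      = 2*(∑' v : ℕ, 1/((x+1)+(v:ℝ))^2) - 8*x*(∑' v : ℕ, 1/((x+1)+(v:ℝ))^3)
        + 6*x^2*(∑' v : ℕ, 1/((x+1)+(v:ℝ))^4) := by
    rw [tsum_congr hterm]
    rw [Summable.tsum_add (((s2.mul_left 2)).sub (s3.mul_left (8*x))) (s4.mul_left (6*x^2))]
    rw [Summable.tsum_sub (s2.mul_left 2) (s3.mul_left (8*x))]
    rw [tsum_mul_left, tsum_mul_left, tsum_mul_left]
  have b2 := S2_ge hz1
  have b3 := S3_le hz1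
  have b4 := S4_ge hz1
  have rpos : 0 < 2*Fb (x+1) - 8*x*Gb (x+1) + 6*x^2*Lb (x+1) := by
    have hne : (x:ℝ) + 1 ≠ 0 := ne_of_gt hz0
    have e : 2*Fb (x+1) - 8*x*Gb (x+1) + 6*x^2*Lb (x+1)
        = (10*x^5+80*x^4+268*x^3+464*x^2+344*x+98) / (30*(x+1)^8) := by
      unfold Fb Gb Lb
      field_simp
      ring
    rw [e]
    apply div_pos _ (by positivity)
    nlinarith [pow_pos hx 5, pow_pos hx 4, pow_pos hx 3, pow_pos hx 2, hx]
  have hcomb : 2*Fb (x+1) - 8*x*Gb (x+1) + 6*x^2*Lb (x+1) ≤ ∑' v, g (v+1) := by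
    rw [eval]
    have m3 : 8*x*(∑' v : ℕ, 1/((x+1)+(v:ℝ))^3) ≤ 8*x*Gb (x+1) :=
      mul_le_mul_of_nonneg_left b3 (by positivity)
    have m2 : 2*Fb (x+1) ≤ 2*(∑' v : ℕ, 1/((x+1)+(v:ℝ))^2) := by linarith
    have m4 : 6*x^2*Lb (x+1) ≤ 6*x^2*(∑' v : ℕ, 1/((x+1)+(v:ℝ))^4) :=
      mul_le_mul_of_nonneg_left b4 (by positivity)
    linarith
  have : 0 < ∑' v, g (v+1) := lt_of_lt_of_le rpos hcomb
  rw [show (∑' v : ℕ, 2*(v:ℝ)*((v:ℝ)-2*x)/(x+(v:ℝ))^4) = ∑' v, g v from rfl, split, g0, zero_add]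
  exact this

lemma hP (v : ℕ) {x : ℝ} (hx : 0 < x) :
    HasDerivAt (fun y : ℝ => y^2*(1/(y+(v:ℝ))^2)) (2*x*(v:ℝ)/(x+(v:ℝ))^3) x := by
  have hv : (0:ℝ) ≤ (v:ℝ) := Nat.cast_nonneg v
  have hvx : x + (v:ℝ) ≠ 0 := by positivity
  have h1 : HasDerivAt (fun y : ℝ => (y+(v:ℝ))^2) (2*(x+(v:ℝ))) x := by
    simpa [Pi.pow_def] using ((hasDerivAt_id x).add_const (v:ℝ)).pow 2
  have h2 : HasDerivAt (fun y : ℝ => 1/(y+(v:ℝ))^2) (-(2*(x+(v:ℝ)))/((x+(v:ℝ))^2)^2) x := by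
    simpa [one_div, Pi.inv_def] using h1.inv (pow_ne_zero 2 hvx)
  have h3 := (hasDerivAt_pow 2 x).mul h2
  refine h3.congr_deriv ?_
  field_simp
  ring

lemma hP1 (v : ℕ) {x : ℝ} (hx : 0 < x) :
    HasDerivAt (fun y : ℝ => 2*y*(v:ℝ)/(y+(v:ℝ))^3) (2*(v:ℝ)*((v:ℝ)-2*x)/(x+(v:ℝ))^4) x := by
  have hv : (0:ℝ) ≤ (v:ℝ) := Nat.cast_nonneg v
  have hvx : x + (v:ℝ) ≠ 0 := by positivity
  have hnum : HasDerivAt (fun y : ℝ => 2*y*(v:ℝ)) (2*(v:ℝ)) x := by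
    simpa using (((hasDerivAt_id x).const_mul 2).mul_const (v:ℝ))
  have hden : HasDerivAt (fun y : ℝ => (y+(v:ℝ))^3) (3*(x+(v:ℝ))^2) x := by
    simpa [Pi.pow_def] using ((hasDerivAt_id x).add_const (v:ℝ)).pow 3
  have h3 := hnum.div hden (pow_ne_zero 3 hvx)
  refine h3.congr_deriv ?_
  field_simp
  ring

lemma hasDerivAt_F0 {x : ℝ} (hx : 0 < x) :
    HasDerivAt (fun y : ℝ => ∑' v : ℕ, y^2*(1/(y+(v:ℝ))^2))
      (∑' v : ℕ, 2*x*(v:ℝ)/(x+(v:ℝ))^3) x := by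
  have ha : (0:ℝ) < x/2 := by linarith
  have hmem : x ∈ Ioo (x/2) (x+1) := Set.mem_Ioo.mpr ⟨by linarith, by linarith⟩
  have hbd : ∀ (v : ℕ) (y : ℝ), y ∈ Ioo (x/2) (x+1) →
      ‖2*y*(v:ℝ)/(y+(v:ℝ))^3‖ ≤ 2*(x+1)*(1/(x/2+(v:ℝ))^2) := by
    intro v y hy
    obtain ⟨hy1, hy2⟩ := hy
    have hy0 : (0:ℝ) < y := lt_trans ha hy1
    have hv : (0:ℝ) ≤ (v:ℝ) := Nat.cast_nonneg v
    rw [Real.norm_eq_abs, abs_of_nonneg (by positivity)]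
    have step1 : 2*y*(v:ℝ)/(y+(v:ℝ))^3 ≤ 2*(x+1)*(x/2+(v:ℝ))/(x/2+(v:ℝ))^3 := by
      apply div_le_div₀ (by positivity) (by nlinarith) (by positivity)
      apply pow_le_pow_left₀ (by positivity)
      linarith
    have step2 : 2*(x+1)*(x/2+(v:ℝ))/(x/2+(v:ℝ))^3 = 2*(x+1)*(1/(x/2+(v:ℝ))^2) := by
      have : x/2 + (v:ℝ) ≠ 0 := by positivity
      field_simp
    linarith [step1, step2.le]
  exact hasDerivAt_tsum_of_isPreconnected
    ((summable_shift ha le_rfl).mul_left (2*(x+1))) isOpen_Ioo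
    (convex_Ioo _ _).isPreconnected
    (fun v y hy => hP v (lt_trans ha hy.1)) hbd hmem
    ((summable_shift hx le_rfl).mul_left (x^2)) hmem

lemma hasDerivAt_F1 {x : ℝ} (hx : 0 < x) :
    HasDerivAt (fun y : ℝ => ∑' v : ℕ, 2*y*(v:ℝ)/(y+(v:ℝ))^3)
      (∑' v : ℕ, 2*(v:ℝ)*((v:ℝ)-2*x)/(x+(v:ℝ))^4) x := by
  have ha : (0:ℝ) < x/2 := by linarith
  have hmem : x ∈ Ioo (x/2) (x+1) := Set.mem_Ioo.mpr ⟨by linarith, by linarith⟩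
  have hbd : ∀ (v : ℕ) (y : ℝ), y ∈ Ioo (x/2) (x+1) →
      ‖2*(v:ℝ)*((v:ℝ)-2*y)/(y+(v:ℝ))^4‖ ≤ 2*(1+2*(x+1))*(1/(x/2+(v:ℝ))^2) := by
    intro v y hy
    obtain ⟨hy1, hy2⟩ := hy
    have hy0 : (0:ℝ) < y := lt_trans ha hy1
    have hv : (0:ℝ) ≤ (v:ℝ) := Nat.cast_nonneg v
    rw [Real.norm_eq_abs, abs_div, abs_of_nonneg (by positivity : (0:ℝ) ≤ (y+(v:ℝ))^4)]
    have e1 : |2*(v:ℝ)*((v:ℝ)-2*y)| ≤ 2*(v:ℝ)*((v:ℝ)+2*(x+1)) := by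
      rw [abs_mul, abs_of_nonneg (by positivity : (0:ℝ) ≤ 2*(v:ℝ))]
      apply mul_le_mul_of_nonneg_left _ (by positivity)
      rw [abs_le]
      constructor <;> nlinarith
    have e2 : 2*(v:ℝ)*((v:ℝ)+2*(x+1)) ≤ 2*(1+2*(x+1))*(x/2+(v:ℝ))^2 := by
      rcases Nat.eq_zero_or_pos v with h0 | h1
      · subst h0; push_cast; nlinarith
      · have hv1 : (1:ℝ) ≤ (v:ℝ) := by exact_mod_cast h1
        nlinarith [sq_nonneg ((v:ℝ) - 1), sq_nonneg (x/2)]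
    have step1 : |2*(v:ℝ)*((v:ℝ)-2*y)| / (y+(v:ℝ))^4
        ≤ 2*(1+2*(x+1))*(x/2+(v:ℝ))^2 / (x/2+(v:ℝ))^4 := by
      apply div_le_div₀ (by positivity) (le_trans e1 e2) (by positivity)
      apply pow_le_pow_left₀ (by positivity)
      linarith
    have step2 : 2*(1+2*(x+1))*(x/2+(v:ℝ))^2 / (x/2+(v:ℝ))^4
        = 2*(1+2*(x+1))*(1/(x/2+(v:ℝ))^2) := by
      have : x/2 + (v:ℝ) ≠ 0 := by positivity
      field_simp
    linarith [step1, step2.le]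
  have hsum0 : Summable (fun v : ℕ => 2*x*(v:ℝ)/(x+(v:ℝ))^3) := by
    apply Summable.of_nonneg_of_le (fun v => by positivity)
      (fun v => ?_) ((summable_shift hx le_rfl).mul_left (2*x))
    have hv : (0:ℝ) ≤ (v:ℝ) := Nat.cast_nonneg v
    have step1 : 2*x*(v:ℝ)/(x+(v:ℝ))^3 ≤ 2*x*(x+(v:ℝ))/(x+(v:ℝ))^3 := by
      apply div_le_div₀ (by positivity) (by nlinarith) (by positivity) le_rfl
    have step2 : 2*x*(x+(v:ℝ))/(x+(v:ℝ))^3 = 2*x*(1/(x+(v:ℝ))^2) := by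
      have : x + (v:ℝ) ≠ 0 := by positivity
      field_simp
    linarith [step1, step2.le]
  exact hasDerivAt_tsum_of_isPreconnected
    ((summable_shift ha le_rfl).mul_left (2*(1+2*(x+1)))) isOpen_Ioo
    (convex_Ioo _ _).isPreconnected
    (fun v y hy => hP1 v (lt_trans ha hy.1)) hbd hmem hsum0 hmem


theorem stmt_10 :
    StrictConvexOn ℝ (Set.Ioi 0) (fun x : ℝ => x ^ 2 * trigamma x) := by
  have hrepr : (fun x : ℝ => x ^ 2 * trigamma x)
      = fun x : ℝ => ∑' v : ℕ, x^2*(1/(x+(v:ℝ))^2) := by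
    funext x
    simp only [trigamma]
    exact tsum_mul_left.symm
  rw [hrepr]
  apply strictConvexOn_of_deriv2_pos (convex_Ioi 0)
  · intro y hy
    exact (hasDerivAt_F0 hy).continuousAt.continuousWithinAt
  · intro y hy
    rw [interior_Ioi] at hy
    rw [Set.mem_Ioi] at hy
    have hd1 : deriv (fun x : ℝ => ∑' v : ℕ, x^2*(1/(x+(v:ℝ))^2))
        =ᶠ[nhds y] (fun x : ℝ => ∑' v : ℕ, 2*x*(v:ℝ)/(x+(v:ℝ))^3) := by
      filter_upwards [isOpen_Ioi.mem_nhds (Set.mem_Ioi.mpr hy)] with z hz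
      exact (hasDerivAt_F0 (Set.mem_Ioi.mp hz)).deriv
    have h2 : deriv^[2] (fun x : ℝ => ∑' v : ℕ, x^2*(1/(x+(v:ℝ))^2)) y
        = deriv (fun x : ℝ => ∑' v : ℕ, 2*x*(v:ℝ)/(x+(v:ℝ))^3) y := by
      show deriv (deriv _) y = _
      exact hd1.deriv_eq
    rw [h2, (hasDerivAt_F1 hy).deriv]
    exact key_pos hy
end

section
/- lim_{x→∞} (2x·ψ₁(x) + x²·ψ₂(x) − 1)/(x·ψ₁(x) − 1)² = −2/3, where ψ₁ and ψ₂ are the polygamma functions of orders one and two. -/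
open Filter Topology

private noncomputable def fA (y : ℝ) : ℝ := 1/y + 1/2 * (1/y^2) + 1/6 * (1/y^3)
private noncomputable def fAm (y : ℝ) : ℝ := fA y - 1/30 * (1/y^5)
private noncomputable def fB (y : ℝ) : ℝ := 1/2 * (1/y^2) + 1/2 * (1/y^3) + 1/4 * (1/y^4)
private noncomputable def fBm (y : ℝ) : ℝ := fB y - 1/12 * (1/y^6)

private lemma tele_hasSum (x : ℝ) (hx : 1 ≤ x) (k : ℕ) (hk : k ≠ 0) :
    HasSum (fun v : ℕ => 1/(x+(v:ℝ))^k - 1/(x+(v:ℝ)+1)^k) (1/x^k) := by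
  have hx0 : (0:ℝ) < x := by linarith
  have hnn : ∀ v : ℕ, 0 ≤ 1/(x+(v:ℝ))^k - 1/(x+(v:ℝ)+1)^k := by
    intro v
    have h1 : (0:ℝ) < x + v := by positivity
    have h2 : (x+(v:ℝ))^k ≤ (x+(v:ℝ)+1)^k := pow_le_pow_left₀ h1.le (by linarith) k
    have h3 : 1/(x+(v:ℝ)+1)^k ≤ 1/(x+(v:ℝ))^k :=
      one_div_le_one_div_of_le (by positivity) h2
    linarith
  have hps : ∀ n : ℕ, ∑ v ∈ Finset.range n, (1/(x+(v:ℝ))^k - 1/(x+(v:ℝ)+1)^k)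
      = 1/x^k - 1/(x+(n:ℝ))^k := by
    intro n
    have h := Finset.sum_range_sub' (f := fun v : ℕ => 1/(x+(v:ℝ))^k) n
    push_cast at h
    simpa [← add_assoc] using h
  have hsum : Summable (fun v : ℕ => 1/(x+(v:ℝ))^k - 1/(x+(v:ℝ)+1)^k) := by
    apply summable_of_sum_range_le hnn (c := 1/x^k)
    intro n
    rw [hps n]
    have : (0:ℝ) ≤ 1/(x+(n:ℝ))^k := by positivity
    linarith
  have hlim : Tendsto (fun n : ℕ => ∑ v ∈ Finset.range n,
      (1/(x+(v:ℝ))^k - 1/(x+(v:ℝ)+1)^k)) atTop (𝓝 (1/x^k)) := by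
    simp only [hps]
    have h1 : Tendsto (fun n : ℕ => (x+(n:ℝ))^k) atTop atTop :=
      (tendsto_pow_atTop hk).comp
        (tendsto_atTop_add_const_left _ x tendsto_natCast_atTop_atTop)
    have h2 : Tendsto (fun n : ℕ => 1/(x+(n:ℝ))^k) atTop (𝓝 0) := by
      exact h1.inv_tendsto_atTop.congr (fun n => by simp [one_div])
    simpa using tendsto_const_nhds.sub h2
  have h2 := hsum.hasSum.tendsto_sum_nat
  exact tendsto_nhds_unique h2 hlim ▸ hsum.hasSum

private lemma hasSum_fA (x : ℝ) (hx : 1 ≤ x) :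
    HasSum (fun v : ℕ => fA (x+v) - fA (x+(v:ℝ)+1)) (fA x) := by
  have h1 := tele_hasSum x hx 1 one_ne_zero
  have h2 := (tele_hasSum x hx 2 (by norm_num)).mul_left (1/2)
  have h3 := (tele_hasSum x hx 3 (by norm_num)).mul_left (1/6)
  have h := (h1.add h2).add h3
  have he : (fun v : ℕ => 1/(x+(v:ℝ))^1 - 1/(x+(v:ℝ)+1)^1
      + (1/2 * (1/(x+(v:ℝ))^2 - 1/(x+(v:ℝ)+1)^2))
      + (1/6 * (1/(x+(v:ℝ))^3 - 1/(x+(v:ℝ)+1)^3)))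
      = fun v : ℕ => fA (x+v) - fA (x+(v:ℝ)+1) := by
    funext v
    simp only [fA]; ring
  have hv : 1/x^1 + 1/2 * (1/x^2) + 1/6 * (1/x^3) = fA x := by
    simp only [fA]; ring
  rw [he, hv] at h
  exact h

private lemma hasSum_fAm (x : ℝ) (hx : 1 ≤ x) :
    HasSum (fun v : ℕ => fAm (x+v) - fAm (x+(v:ℝ)+1)) (fAm x) := by
  have h1 := hasSum_fA x hx
  have h5 := (tele_hasSum x hx 5 (by norm_num)).mul_left (1/30)
  have h := h1.sub h5
  have he : (fun v : ℕ => (fA (x+v) - fA (x+(v:ℝ)+1))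
      - 1/30 * (1/(x+(v:ℝ))^5 - 1/(x+(v:ℝ)+1)^5))
      = fun v : ℕ => fAm (x+v) - fAm (x+(v:ℝ)+1) := by
    funext v
    simp only [fAm]; ring
  have hv : fA x - 1/30 * (1/x^5) = fAm x := by rfl
  rw [he, hv] at h
  exact h

private lemma hasSum_fB (x : ℝ) (hx : 1 ≤ x) :
    HasSum (fun v : ℕ => fB (x+v) - fB (x+(v:ℝ)+1)) (fB x) := by
  have h2 := (tele_hasSum x hx 2 (by norm_num)).mul_left (1/2)
  have h3 := (tele_hasSum x hx 3 (by norm_num)).mul_left (1/2)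
  have h4 := (tele_hasSum x hx 4 (by norm_num)).mul_left (1/4)
  have h := (h2.add h3).add h4
  have he : (fun v : ℕ => 1/2 * (1/(x+(v:ℝ))^2 - 1/(x+(v:ℝ)+1)^2)
      + 1/2 * (1/(x+(v:ℝ))^3 - 1/(x+(v:ℝ)+1)^3)
      + 1/4 * (1/(x+(v:ℝ))^4 - 1/(x+(v:ℝ)+1)^4))
      = fun v : ℕ => fB (x+v) - fB (x+(v:ℝ)+1) := by
    funext v
    simp only [fB]; ring
  have hv : 1/2 * (1/x^2) + 1/2 * (1/x^3) + 1/4 * (1/x^4) = fB x := rfl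
  rw [he, hv] at h
  exact h

private lemma hasSum_fBm (x : ℝ) (hx : 1 ≤ x) :
    HasSum (fun v : ℕ => fBm (x+v) - fBm (x+(v:ℝ)+1)) (fBm x) := by
  have h1 := hasSum_fB x hx
  have h6 := (tele_hasSum x hx 6 (by norm_num)).mul_left (1/12)
  have h := h1.sub h6
  have he : (fun v : ℕ => (fB (x+v) - fB (x+(v:ℝ)+1))
      - 1/12 * (1/(x+(v:ℝ))^6 - 1/(x+(v:ℝ)+1)^6))
      = fun v : ℕ => fBm (x+v) - fBm (x+(v:ℝ)+1) := by
    funext v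
    simp only [fBm]; ring
  have hv : fB x - 1/12 * (1/x^6) = fBm x := by rfl
  rw [he, hv] at h
  exact h

private lemma ineqA (y : ℝ) (hy : 1 ≤ y) : 1/y^2 ≤ fA y - fA (y+1) := by
  have h0 : (0:ℝ) < y := by linarith
  have h1 : (0:ℝ) < y + 1 := by linarith
  have key : fA y - fA (y+1) - 1/y^2 = 1/(6*y^3*(y+1)^3) := by
    simp only [fA]; field_simp; ring
  nlinarith [key, one_div_pos.mpr (show (0:ℝ) < 6*y^3*(y+1)^3 by positivity)]

private lemma ineqAm (y : ℝ) (hy : 1 ≤ y) : fAm y - fAm (y+1) ≤ 1/y^2 := by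
  have h0 : (0:ℝ) < y := by linarith
  have h1 : (0:ℝ) < y + 1 := by linarith
  have key : fAm y - fAm (y+1) - 1/y^2
      = -((5*y^2+5*y+1)/(30*y^5*(y+1)^5)) := by
    simp only [fAm, fA]; field_simp; ring
  have hp : 0 ≤ (5*y^2+5*y+1)/(30*y^5*(y+1)^5) := by positivity
  nlinarith [key]

private lemma ineqB (y : ℝ) (hy : 1 ≤ y) : 1/y^3 ≤ fB y - fB (y+1) := by
  have h0 : (0:ℝ) < y := by linarith
  have h1 : (0:ℝ) < y + 1 := by linarith
  have key : fB y - fB (y+1) - 1/y^3 = (2*y+1)/(4*y^4*(y+1)^4) := by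
    simp only [fB]; field_simp; ring
  have hp : 0 ≤ (2*y+1)/(4*y^4*(y+1)^4) := by positivity
  nlinarith [key]

private lemma ineqBm (y : ℝ) (hy : 1 ≤ y) : fBm y - fBm (y+1) ≤ 1/y^3 := by
  have h0 : (0:ℝ) < y := by linarith
  have h1 : (0:ℝ) < y + 1 := by linarith
  have key : fBm y - fBm (y+1) - 1/y^3
      = -((2*y+1)^3/(12*y^6*(y+1)^6)) := by
    simp only [fBm, fB]; field_simp; ring
  have hp : 0 ≤ (2*y+1)^3/(12*y^6*(y+1)^6) := by positivity
  nlinarith [key]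

private lemma tri_bounds (x : ℝ) (hx : 1 ≤ x) :
    fAm x ≤ trigamma x ∧ trigamma x ≤ fA x := by
  have hA := hasSum_fA x hx
  have hAm := hasSum_fAm x hx
  have hxv : ∀ v : ℕ, 1 ≤ x + (v:ℝ) := by
    intro v
    have : (0:ℝ) ≤ v := Nat.cast_nonneg v
    linarith
  have hle : ∀ v : ℕ, 1/(x+(v:ℝ))^2 ≤ fA (x+v) - fA (x+(v:ℝ)+1) :=
    fun v => ineqA _ (hxv v)
  have hge : ∀ v : ℕ, fAm (x+v) - fAm (x+(v:ℝ)+1) ≤ 1/(x+(v:ℝ))^2 :=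
    fun v => ineqAm _ (hxv v)
  have hsummable : Summable (fun v : ℕ => 1/(x+(v:ℝ))^2) :=
    Summable.of_nonneg_of_le (fun v => by positivity) hle hA.summable
  constructor
  · rw [trigamma, ← hAm.tsum_eq]
    exact Summable.tsum_le_tsum hge hAm.summable hsummable
  · rw [trigamma, ← hA.tsum_eq]
    exact Summable.tsum_le_tsum hle hsummable hA.summable

private lemma tetra_bounds (x : ℝ) (hx : 1 ≤ x) :
    -2 * fB x ≤ tetragamma x ∧ tetragamma x ≤ -2 * fBm x := by
  have hB := hasSum_fB x hx
  have hBm := hasSum_fBm x hx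
  have hxv : ∀ v : ℕ, 1 ≤ x + (v:ℝ) := by
    intro v
    have : (0:ℝ) ≤ v := Nat.cast_nonneg v
    linarith
  have hle : ∀ v : ℕ, 1/(x+(v:ℝ))^3 ≤ fB (x+v) - fB (x+(v:ℝ)+1) :=
    fun v => ineqB _ (hxv v)
  have hge : ∀ v : ℕ, fBm (x+v) - fBm (x+(v:ℝ)+1) ≤ 1/(x+(v:ℝ))^3 :=
    fun v => ineqBm _ (hxv v)
  have hsummable : Summable (fun v : ℕ => 1/(x+(v:ℝ))^3) :=
    Summable.of_nonneg_of_le (fun v => by positivity) hle hB.summable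
  have hub : (∑' v : ℕ, 1/(x+(v:ℝ))^3) ≤ fB x := by
    rw [← hB.tsum_eq]
    exact Summable.tsum_le_tsum hle hsummable hB.summable
  have hlb : fBm x ≤ ∑' v : ℕ, 1/(x+(v:ℝ))^3 := by
    rw [← hBm.tsum_eq]
    exact Summable.tsum_le_tsum hge hBm.summable hsummable
  constructor
  · rw [tetragamma]; nlinarith [hub]
  · rw [tetragamma]; nlinarith [hlb]

private lemma sandwich_div (n s a b c d : ℝ) (han : a ≤ n) (hnb : n ≤ b)
    (hb0 : b ≤ 0) (hc : 0 < c) (hcs : c ≤ s) (hsd : s ≤ d) :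
    a/c^2 ≤ n/s^2 ∧ n/s^2 ≤ b/d^2 := by
  have hs : 0 < s := hc.trans_le hcs
  have hd : 0 < d := hs.trans_le hsd
  constructor
  · rw [div_le_div_iff₀ (by positivity) (by positivity)]
    nlinarith [mul_le_mul hcs hcs hc.le hs.le]
  · rw [div_le_div_iff₀ (by positivity) (by positivity)]
    nlinarith [mul_le_mul hsd hsd hs.le hd.le]

set_option maxHeartbeats 1000000 in
private lemma pointwise_bounds (x : ℝ) (hx : 1 ≤ x) :
    (-(1/(6*x^2)) - 1/(15*x^4)) / (1/(2*x) + 1/(6*x^2) - 1/(30*x^4))^2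
      ≤ (2*x*trigamma x + x^2*tetragamma x - 1) / (x*trigamma x - 1)^2 ∧
    (2*x*trigamma x + x^2*tetragamma x - 1) / (x*trigamma x - 1)^2
      ≤ (-(1/(6*x^2)) + 1/(6*x^4)) / (1/(2*x) + 1/(6*x^2))^2 := by
  have h0 : (0:ℝ) < x := by linarith
  have hne : x ≠ 0 := ne_of_gt h0
  have hx2 : (1:ℝ) ≤ x^2 := by nlinarith
  obtain ⟨ht1, ht2⟩ := tri_bounds x hx
  obtain ⟨hq1, hq2⟩ := tetra_bounds x hx
  have han : -(1/(6*x^2)) - 1/(15*x^4) ≤ 2*x*trigamma x + x^2*tetragamma x - 1 := by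
    have e : 2*x*fAm x + x^2*(-2*fB x) - 1 = -(1/(6*x^2)) - 1/(15*x^4) := by
      simp only [fAm, fA, fB]; field_simp; ring
    nlinarith [mul_le_mul_of_nonneg_left ht1 (show (0:ℝ) ≤ 2*x by linarith),
      mul_le_mul_of_nonneg_left hq1 (show (0:ℝ) ≤ x^2 by positivity)]
  have hnb : 2*x*trigamma x + x^2*tetragamma x - 1 ≤ -(1/(6*x^2)) + 1/(6*x^4) := by
    have e : 2*x*fA x + x^2*(-2*fBm x) - 1 = -(1/(6*x^2)) + 1/(6*x^4) := by
      simp only [fBm, fA, fB]; field_simp; ring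
    nlinarith [mul_le_mul_of_nonneg_left ht2 (show (0:ℝ) ≤ 2*x by linarith),
      mul_le_mul_of_nonneg_left hq2 (show (0:ℝ) ≤ x^2 by positivity)]
  have hb0 : -(1/(6*x^2)) + 1/(6*x^4) ≤ 0 := by
    have h1 : 1/(6*x^4) ≤ 1/(6*x^2) :=
      one_div_le_one_div_of_le (by positivity) (by nlinarith [sq_nonneg x])
    linarith
  have hcs : 1/(2*x) + 1/(6*x^2) - 1/(30*x^4) ≤ x*trigamma x - 1 := by
    have e : x*fAm x - 1 = 1/(2*x) + 1/(6*x^2) - 1/(30*x^4) := by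
      simp only [fAm, fA]; field_simp; ring
    nlinarith [mul_le_mul_of_nonneg_left ht1 h0.le]
  have hsd : x*trigamma x - 1 ≤ 1/(2*x) + 1/(6*x^2) := by
    have e : x*fA x - 1 = 1/(2*x) + 1/(6*x^2) := by
      simp only [fA]; field_simp; ring
    nlinarith [mul_le_mul_of_nonneg_left ht2 h0.le]
  have hc : (0:ℝ) < 1/(2*x) + 1/(6*x^2) - 1/(30*x^4) := by
    have h1 : 1/(30*x^4) ≤ 1/(2*x) := by
      apply one_div_le_one_div_of_le (by positivity)
      nlinarith [pow_le_pow_left₀ (show (0:ℝ) ≤ 1 by norm_num) hx 3]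
    have h2 : (0:ℝ) < 1/(6*x^2) := by positivity
    linarith
  exact sandwich_div _ _ _ _ _ _ han hnb hb0 hc hcs hsd

theorem stmt_12 :
    Filter.Tendsto
      (fun x : ℝ =>
        (2 * x * trigamma x + x ^ 2 * tetragamma x - 1) / (x * trigamma x - 1) ^ 2)
      Filter.atTop (nhds (-2 / 3)) := by
  have hinv : Tendsto (fun x : ℝ => 1/x) atTop (𝓝 0) := by
    simpa [one_div] using tendsto_inv_atTop_zero
  have hF : Tendsto (fun t : ℝ => (-(1/6) - t^2/15) / (1/2 + t/6 - t^3/30)^2)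
      (𝓝 0) (𝓝 (-2/3)) := by
    have hc : ContinuousAt (fun t : ℝ => (-(1/6) - t^2/15) / (1/2 + t/6 - t^3/30)^2) 0 := by
      apply ContinuousAt.div (by fun_prop) (by fun_prop)
      norm_num
    have h := hc.tendsto
    norm_num at h
    convert h using 2
    norm_num
  have hG : Tendsto (fun t : ℝ => (-(1/6) + t^2/6) / (1/2 + t/6)^2)
      (𝓝 0) (𝓝 (-2/3)) := by
    have hc : ContinuousAt (fun t : ℝ => (-(1/6) + t^2/6) / (1/2 + t/6)^2) 0 := by
      apply ContinuousAt.div (by fun_prop) (by fun_prop)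
      norm_num
    have h := hc.tendsto
    norm_num at h
    convert h using 2
    norm_num
  have hL : Tendsto (fun x : ℝ => (-(1/(6*x^2)) - 1/(15*x^4))
      / (1/(2*x) + 1/(6*x^2) - 1/(30*x^4))^2) atTop (𝓝 (-2/3)) := by
    refine (hF.comp hinv).congr' ?_
    filter_upwards [eventually_ge_atTop (1:ℝ)] with x hx
    have h0 : (0:ℝ) < x := by linarith
    have hne : x ≠ 0 := ne_of_gt h0
    have ht : (1/x : ℝ) ≠ 0 := one_div_ne_zero hne
    simp only [Function.comp]
    have e1 : -(1/(6*x^2)) - 1/(15*x^4) = (1/x)^2 * (-(1/6) - (1/x)^2/15) := by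
      field_simp
    have e2 : 1/(2*x) + 1/(6*x^2) - 1/(30*x^4)
        = (1/x) * (1/2 + (1/x)/6 - (1/x)^3/30) := by
      field_simp
    rw [e1, e2, mul_pow, mul_div_mul_left _ _ (pow_ne_zero 2 ht)]
  have hU : Tendsto (fun x : ℝ => (-(1/(6*x^2)) + 1/(6*x^4))
      / (1/(2*x) + 1/(6*x^2))^2) atTop (𝓝 (-2/3)) := by
    refine (hG.comp hinv).congr' ?_
    filter_upwards [eventually_ge_atTop (1:ℝ)] with x hx
    have h0 : (0:ℝ) < x := by linarith
    have hne : x ≠ 0 := ne_of_gt h0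
    have ht : (1/x : ℝ) ≠ 0 := one_div_ne_zero hne
    simp only [Function.comp]
    have e1 : -(1/(6*x^2)) + 1/(6*x^4) = (1/x)^2 * (-(1/6) + (1/x)^2/6) := by
      field_simp
    have e2 : 1/(2*x) + 1/(6*x^2) = (1/x) * (1/2 + (1/x)/6) := by
      field_simp
    rw [e1, e2, mul_pow, mul_div_mul_left _ _ (pow_ne_zero 2 ht)]
  apply tendsto_of_tendsto_of_tendsto_of_le_of_le' hL hU
  · filter_upwards [eventually_ge_atTop (1:ℝ)] with x hx
    exact (pointwise_bounds x hx).1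
  · filter_upwards [eventually_ge_atTop (1:ℝ)] with x hx
    exact (pointwise_bounds x hx).2
end
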